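/- arXiv:math/0607163 — 5 statements merged into one kernel-verified Lean document; each statement's English description precedes it below -/
import Mathlib

section
/- For nonnegative integers u, d and positive integers b, t with -b < u - d < t, the number of lattice paths from (0,0) to (u+d, u-d) using steps (1,1) and (1,-1) that touch neither the line y = -b nor the line y = t equals the sum over all integers k of (binomial(u+d, u - k(b+t)) - binomial(u+d, u - k(b+t) + b)). -/
open Finset

/-- The height of the lattice path with step sequence `s` (true = up-step (1,1),
false = down-step (1,-1)) after `i` steps. -/
def pathHt {m : ℕ} (s : Fin m → Bool) (i : ℕ) : ℤ :=
  ∑ j ∈ Finset.univ.filter (fun j : Fin m => (j : ℕ) < i), (if s j then (1 : ℤ) else -1)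

/-- Binomial coefficient `n` choose `j` for an integer lower index `j`,
equal to `0` when `j < 0` or `j > n`. -/
def intChoose (n : ℕ) (j : ℤ) : ℤ :=
  if 0 ≤ j then (n.choose j.toNat : ℤ) else 0

lemma intChoose_neg {n : ℕ} {j : ℤ} (h : j < 0) : intChoose n j = 0 := by
  simp [intChoose, not_le.mpr h]

lemma intChoose_gt {n : ℕ} {j : ℤ} (h : (n:ℤ) < j) : intChoose n j = 0 := by
  rcases le_or_gt 0 j with hj | hj
  · simp only [intChoose, if_pos hj]
    rw [Nat.choose_eq_zero_of_lt]
    · simp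
    · omega
  · exact intChoose_neg hj

lemma intChoose_bounds {n : ℕ} {j : ℤ} (h : intChoose n j ≠ 0) : 0 ≤ j ∧ j ≤ n := by
  constructor
  · by_contra hc; exact h (intChoose_neg (by omega))
  · by_contra hc; exact h (intChoose_gt (by omega))

lemma intChoose_symm (n : ℕ) (j : ℤ) : intChoose n j = intChoose n ((n:ℤ) - j) := by
  rcases lt_or_ge j 0 with hj | hj
  · rw [intChoose_neg hj, intChoose_gt (by omega)]
  rcases le_or_gt j n with hj2 | hj2
  · have h1 : (0:ℤ) ≤ (n:ℤ) - j := by omega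
    simp only [intChoose, if_pos hj, if_pos h1]
    norm_cast
    rw [← Nat.choose_symm (by omega)]
    congr 1
    omega
  · rw [intChoose_gt hj2, intChoose_neg (by omega)]

lemma intChoose_succ (n : ℕ) (j : ℤ) :
    intChoose (n+1) j = intChoose n j + intChoose n (j-1) := by
  rcases lt_or_ge j 0 with hj | hj
  · rw [intChoose_neg hj, intChoose_neg hj, intChoose_neg (by omega)]; ring
  rcases eq_or_lt_of_le hj with hj0 | hj0
  · subst hj0
    rw [intChoose_neg (show (0:ℤ)-1 < 0 by norm_num)]
    simp [intChoose]
  · obtain ⟨m, rfl⟩ : ∃ m : ℕ, j = (m:ℤ) + 1 := ⟨(j-1).toNat, by omega⟩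
    have h1 : (0:ℤ) ≤ (m:ℤ) + 1 := by positivity
    have h2 : (0:ℤ) ≤ (m:ℤ) := by positivity
    simp only [intChoose, if_pos h1, add_sub_cancel_right, if_pos h2]
    have : ((m:ℤ)+1).toNat = m + 1 := by omega
    rw [this]
    have : ((m:ℤ)).toNat = m := by omega
    rw [this, Nat.choose_succ_succ]
    push_cast; ring

lemma choose_vanish (n : ℕ) (c L : ℤ) (hL : 1 ≤ L) {k : ℤ} (hk : |c| + n < |k|) :
    intChoose n (c - k*L) = 0 := by
  by_contra h
  obtain ⟨h1, h2⟩ := intChoose_bounds h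
  have hkl : |k*L| ≤ |c| + n := by
    have : k*L = c - (c - k*L) := by ring
    rw [this]
    calc |c - (c - k*L)| ≤ |c| + |c - k*L| := abs_sub _ _
      _ ≤ |c| + n := by rw [abs_of_nonneg h1]; omega
  have : |k| ≤ |k*L| := by
    rw [abs_mul]
    nlinarith [abs_nonneg k, abs_of_pos (by omega : (0:ℤ) < L)]
  omega

lemma summable_A (n : ℕ) (c L : ℤ) (hL : 1 ≤ L) :
    Summable (fun k : ℤ => intChoose n (c - k*L)) := by
  apply summable_of_ne_finset_zero (s := Finset.Icc (-(|c| + n)) (|c| + n))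
  intro k hk
  apply choose_vanish n c L hL
  simp only [Finset.mem_Icc, not_and_or, not_le] at hk
  have h0 : (0:ℤ) ≤ |c| := abs_nonneg c
  rcases hk with h | h
  · rw [abs_of_neg (show k < 0 by omega)]; omega
  · rw [abs_of_pos (show 0 < k by omega)]; omega

noncomputable def Fm (b t : ℤ) (u d : ℕ) : ℤ :=
  ∑' k : ℤ, (intChoose (u + d) ((u : ℤ) - k * (b + t))
      - intChoose (u + d) ((u : ℤ) - k * (b + t) + b))

lemma kL_lb {k L : ℤ} (hL : 0 < L) (hk : 1 ≤ k) : L ≤ k * L :=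
  le_mul_of_one_le_left hL.le hk

lemma kL_ub {k L : ℤ} (hL : 0 < L) (hk : k ≤ -1) : k * L ≤ -L := by nlinarith

lemma summable_B (n : ℕ) (c L b : ℤ) (hL : 1 ≤ L) :
    Summable (fun k : ℤ => intChoose n (c - k*L) - intChoose n (c - k*L + b)) :=
  (summable_A n c L hL).sub (((summable_A n (c+b) L hL)).congr (fun k => by ring_nf))

section Fm
variable {b t : ℤ}

lemma F_zero (hb : 0 < b) (ht : 0 < t) : Fm b t 0 0 = 1 := by
  rw [Fm]
  have h : ∀ k : ℤ, (intChoose (0+0) (((0:ℕ):ℤ) - k*(b+t))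
      - intChoose (0+0) (((0:ℕ):ℤ) - k*(b+t) + b)) = if k = 0 then 1 else 0 := by
    intro k
    rcases lt_trichotomy k 0 with h | h | h
    · rw [if_neg (by omega)]
      have h1 := kL_ub (show (0:ℤ) < b + t by omega) (show k ≤ -1 by omega)
      rw [intChoose_gt (by push_cast; omega), intChoose_gt (by push_cast; omega)]; ring
    · subst h; rw [if_pos rfl]
      rw [intChoose_gt (show ((0+0:ℕ):ℤ) < ((0:ℕ):ℤ) - 0*(b+t) + b by push_cast [zero_mul]; try omega)]
      norm_num [intChoose]
    · rw [if_neg (by omega)]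
      have h1 := kL_lb (show (0:ℤ) < b + t by omega) (show 1 ≤ k by omega)
      rw [intChoose_neg (by push_cast; omega), intChoose_neg (by push_cast; omega)]; ring
  rw [tsum_congr h, tsum_ite_eq]

lemma F_top (hb : 0 < b) (ht : 0 < t) {u d : ℕ} (hu : (u:ℤ) - d = t) : Fm b t u d = 0 := by
  have hB : ∀ k : ℤ, intChoose (u+d) ((u : ℤ) - k * (b + t) + b)
      = intChoose (u+d) ((u : ℤ) - (1 - k) * (b + t)) := by
    intro k
    rw [intChoose_symm (u+d) ((u : ℤ) - (1 - k) * (b + t))]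
    congr 1
    push_cast
    linear_combination hu
  rw [Fm]
  have hA : Summable (fun k : ℤ => intChoose (u+d) ((u : ℤ) - k * (b + t))) :=
    summable_A (u+d) u (b+t) (by omega)
  have hA2 : Summable (fun k : ℤ => intChoose (u+d) ((u : ℤ) - (1-k) * (b + t))) := by
    have := ((Equiv.subLeft (1:ℤ)).summable_iff
      (f := fun k : ℤ => intChoose (u+d) ((u : ℤ) - k * (b + t)))).mpr hA
    exact this.congr (fun k => rfl)
  calc ∑' k : ℤ, (intChoose (u+d) ((u : ℤ) - k * (b + t)) - intChoose (u+d) ((u : ℤ) - k * (b + t) + b))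
      = ∑' k : ℤ, (intChoose (u+d) ((u : ℤ) - k * (b + t)) - intChoose (u+d) ((u : ℤ) - (1-k) * (b + t))) :=
        tsum_congr fun k => by rw [hB]
    _ = (∑' k : ℤ, intChoose (u+d) ((u : ℤ) - k * (b + t)))
        - ∑' k : ℤ, intChoose (u+d) ((u : ℤ) - (1-k) * (b + t)) := Summable.tsum_sub hA hA2
    _ = 0 := by
        rw [sub_eq_zero]
        exact Eq.symm (Eq.trans (tsum_congr fun k => rfl)
          ((Equiv.subLeft (1:ℤ)).tsum_eq
            (fun k : ℤ => intChoose (u+d) ((u : ℤ) - k * (b + t)))))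

lemma F_bot (hb : 0 < b) (ht : 0 < t) {u d : ℕ} (hu : (u:ℤ) - d = -b) : Fm b t u d = 0 := by
  have hB : ∀ k : ℤ, intChoose (u+d) ((u : ℤ) - k * (b + t) + b)
      = intChoose (u+d) ((u : ℤ) - (-k) * (b + t)) := by
    intro k
    rw [intChoose_symm (u+d) ((u : ℤ) - (-k) * (b + t))]
    congr 1
    push_cast
    linear_combination hu
  rw [Fm]
  have hA : Summable (fun k : ℤ => intChoose (u+d) ((u : ℤ) - k * (b + t))) :=
    summable_A (u+d) u (b+t) (by omega)
  have hA2 : Summable (fun k : ℤ => intChoose (u+d) ((u : ℤ) - (-k) * (b + t))) := by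
    have := ((Equiv.neg ℤ).summable_iff
      (f := fun k : ℤ => intChoose (u+d) ((u : ℤ) - k * (b + t)))).mpr hA
    exact this.congr (fun k => rfl)
  calc ∑' k : ℤ, (intChoose (u+d) ((u : ℤ) - k * (b + t)) - intChoose (u+d) ((u : ℤ) - k * (b + t) + b))
      = ∑' k : ℤ, (intChoose (u+d) ((u : ℤ) - k * (b + t)) - intChoose (u+d) ((u : ℤ) - (-k) * (b + t))) :=
        tsum_congr fun k => by rw [hB]
    _ = (∑' k : ℤ, intChoose (u+d) ((u : ℤ) - k * (b + t)))
        - ∑' k : ℤ, intChoose (u+d) ((u : ℤ) - (-k) * (b + t)) := Summable.tsum_sub hA hA2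
    _ = 0 := by
        rw [sub_eq_zero]
        exact Eq.symm (Eq.trans (tsum_congr fun k => rfl)
          ((Equiv.neg ℤ).tsum_eq
            (fun k : ℤ => intChoose (u+d) ((u : ℤ) - k * (b + t)))))

lemma F_left (hb : 0 < b) (ht : 0 < t) {d : ℕ} (hd : (d:ℤ) + 1 < b) :
    Fm b t 0 (d+1) = Fm b t 0 d := by
  rw [Fm, Fm]
  apply tsum_congr
  intro k
  have e1 : 0 + (d+1) = d + 1 := by omega
  have e2 : 0 + d = d := by omega
  rw [e1, e2, intChoose_succ, intChoose_succ]
  have v1 : intChoose d (((0:ℕ) : ℤ) - k * (b + t) - 1) = 0 := by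
    rcases lt_trichotomy k 0 with h | h | h
    · have h1 := kL_ub (show (0:ℤ) < b + t by omega) (show k ≤ -1 by omega)
      exact intChoose_gt (by push_cast; omega)
    · subst h; exact intChoose_neg (by push_cast [zero_mul]; try omega)
    · have h1 := kL_lb (show (0:ℤ) < b + t by omega) (show 1 ≤ k by omega)
      exact intChoose_neg (by push_cast; omega)
  have v2 : intChoose d (((0:ℕ) : ℤ) - k * (b + t) + b - 1) = 0 := by
    rcases lt_trichotomy k 0 with h | h | h
    · have h1 := kL_ub (show (0:ℤ) < b + t by omega) (show k ≤ -1 by omega)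
      exact intChoose_gt (by push_cast; omega)
    · subst h; exact intChoose_gt (by push_cast [zero_mul]; try omega)
    · have h1 := kL_lb (show (0:ℤ) < b + t by omega) (show 1 ≤ k by omega)
      exact intChoose_neg (by push_cast; omega)
  rw [v1, v2]
  ring

lemma F_right (hb : 0 < b) (ht : 0 < t) {u : ℕ} (hu : (u:ℤ) + 1 < t) :
    Fm b t (u+1) 0 = Fm b t u 0 := by
  rw [Fm, Fm]
  apply tsum_congr
  intro k
  have e1 : (u+1) + 0 = u + 1 := by omega
  have e2 : u + 0 = u := by omega
  rw [e1, e2, intChoose_succ, intChoose_succ]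
  have v1 : intChoose u ((((u:ℕ)+1 : ℕ) : ℤ) - k * (b + t)) = 0 := by
    rcases lt_trichotomy k 0 with h | h | h
    · have h1 := kL_ub (show (0:ℤ) < b + t by omega) (show k ≤ -1 by omega)
      exact intChoose_gt (by push_cast; omega)
    · subst h; exact intChoose_gt (by push_cast [zero_mul]; try omega)
    · have h1 := kL_lb (show (0:ℤ) < b + t by omega) (show 1 ≤ k by omega)
      exact intChoose_neg (by push_cast; omega)
  have v2 : intChoose u ((((u:ℕ)+1 : ℕ) : ℤ) - k * (b + t) + b) = 0 := by
    rcases lt_trichotomy k 0 with h | h | h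
    · have h1 := kL_ub (show (0:ℤ) < b + t by omega) (show k ≤ -1 by omega)
      exact intChoose_gt (by push_cast; omega)
    · subst h; exact intChoose_gt (by push_cast [zero_mul]; try omega)
    · have h1 := kL_lb (show (0:ℤ) < b + t by omega) (show 1 ≤ k by omega)
      exact intChoose_neg (by push_cast; omega)
  rw [v1, v2]
  have a1 : (((u:ℕ)+1 : ℕ) : ℤ) - k * (b + t) - 1 = ((u:ℕ) : ℤ) - k * (b + t) := by push_cast; ring
  have a2 : (((u:ℕ)+1 : ℕ) : ℤ) - k * (b + t) + b - 1 = ((u:ℕ) : ℤ) - k * (b + t) + b := by push_cast; ring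
  rw [a1, a2]
  ring

lemma F_rec (hb : 0 < b) (ht : 0 < t) (u d : ℕ) :
    Fm b t (u+1) (d+1) = Fm b t u (d+1) + Fm b t (u+1) d := by
  rw [Fm, Fm, Fm]
  have e1 : (u+1) + (d+1) = (u + d + 1) + 1 := by omega
  have e2 : u + (d+1) = u + d + 1 := by omega
  have e3 : (u+1) + d = u + d + 1 := by omega
  rw [e1, e2, e3]
  have hs1 : Summable (fun k : ℤ => intChoose (u+d+1) (((u:ℕ) : ℤ) - k * (b + t))
      - intChoose (u+d+1) (((u:ℕ) : ℤ) - k * (b + t) + b)) :=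
    summable_B (u+d+1) u (b+t) b (by omega)
  have hs2 : Summable (fun k : ℤ => intChoose (u+d+1) ((((u:ℕ)+1 : ℕ) : ℤ) - k * (b + t))
      - intChoose (u+d+1) ((((u:ℕ)+1 : ℕ) : ℤ) - k * (b + t) + b)) := by
    have := summable_B (u+d+1) ((u:ℤ)+1) (b+t) b (by omega)
    exact this.congr (fun k => by push_cast; ring_nf)
  rw [← Summable.tsum_add hs1 hs2]
  apply tsum_congr
  intro k
  rw [intChoose_succ (u+d+1) ((((u:ℕ)+1 : ℕ) : ℤ) - k * (b + t)),
      intChoose_succ (u+d+1) ((((u:ℕ)+1 : ℕ) : ℤ) - k * (b + t) + b)]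
  have a1 : (((u:ℕ)+1 : ℕ) : ℤ) - k * (b + t) - 1 = ((u:ℕ) : ℤ) - k * (b + t) := by push_cast; ring
  have a2 : (((u:ℕ)+1 : ℕ) : ℤ) - k * (b + t) + b - 1 = ((u:ℕ) : ℤ) - k * (b + t) + b := by push_cast; ring
  rw [a1, a2]
  ring

end Fm

def CC (b t : ℤ) (n : ℕ) (h : ℤ) : ℕ :=
  (Finset.univ.filter (fun s : Fin n → Bool =>
      pathHt s n = h ∧ ∀ i ≤ n, pathHt s i ≠ -b ∧ pathHt s i ≠ t)).card

lemma pathHt_zero {m : ℕ} (s : Fin m → Bool) : pathHt s 0 = 0 := by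
  simp [pathHt]

lemma pathHt_succ {m : ℕ} (s : Fin m → Bool) (i : ℕ) (hi : i < m) :
    pathHt s (i+1) = pathHt s i + (if s ⟨i, hi⟩ then 1 else -1) := by
  rw [pathHt, pathHt]
  have h : Finset.univ.filter (fun j : Fin m => (j : ℕ) < i + 1)
      = insert ⟨i, hi⟩ (Finset.univ.filter (fun j : Fin m => (j : ℕ) < i)) := by
    ext j
    simp [Fin.ext_iff]
    omega
  rw [h, Finset.sum_insert (by simp)]
  ring

lemma pathHt_sum_ite {m : ℕ} (s : Fin m → Bool) (i : ℕ) :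
    pathHt s i = ∑ j : Fin m, if (j : ℕ) < i then (if s j then (1:ℤ) else -1) else 0 :=
  Finset.sum_filter _ _

lemma pathHt_snoc {n : ℕ} (s : Fin n → Bool) (x : Bool) {i : ℕ} (hi : i ≤ n) :
    pathHt (Fin.snoc s x) i = pathHt s i := by
  rw [pathHt_sum_ite, pathHt_sum_ite, Fin.sum_univ_castSucc]
  have h : ¬((Fin.last n : ℕ) < i) := by
    simp only [Fin.val_last]
    omega
  simp only [Fin.snoc_castSucc, if_neg h, add_zero, Fin.coe_castSucc]

lemma pathHt_snoc_top {n : ℕ} (s : Fin n → Bool) (x : Bool) :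
    pathHt (Fin.snoc s x) (n+1) = pathHt s n + (if x then 1 else -1) := by
  rw [pathHt_succ (Fin.snoc s x) n (Nat.lt_succ_self n), pathHt_snoc s x (le_refl n)]
  have h : (⟨n, Nat.lt_succ_self n⟩ : Fin (n+1)) = Fin.last n := rfl
  rw [h, Fin.snoc_last]

lemma pathHt_init {n : ℕ} (s : Fin (n+1) → Bool) {i : ℕ} (hi : i ≤ n) :
    pathHt (Fin.init s) i = pathHt s i := by
  conv_rhs => rw [← Fin.snoc_init_self s]
  rw [pathHt_snoc _ _ hi]

lemma pathHt_last {n : ℕ} (s : Fin (n+1) → Bool) :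
    pathHt s (n+1) = pathHt s n + (if s (Fin.last n) then 1 else -1) := by
  conv_lhs => rw [← Fin.snoc_init_self s]
  rw [pathHt_snoc_top, pathHt_init s le_rfl]

lemma pathHt_abs_le {n : ℕ} (s : Fin n → Bool) (i : ℕ) : |pathHt s i| ≤ n := by
  rw [pathHt]
  refine (Finset.abs_sum_le_sum_abs _ _).trans ?_
  calc ∑ j ∈ Finset.univ.filter (fun j : Fin n => (j : ℕ) < i), |if s j then (1:ℤ) else -1|
      ≤ ∑ _j ∈ Finset.univ.filter (fun j : Fin n => (j : ℕ) < i), (1:ℤ) := by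
        refine Finset.sum_le_sum fun j _ => ?_
        split <;> simp
    _ = ((Finset.univ.filter (fun j : Fin n => (j : ℕ) < i)).card : ℤ) := by simp
    _ ≤ n := by
        have := Finset.card_filter_le Finset.univ (fun j : Fin n => (j : ℕ) < i)
        simp only [Finset.card_univ, Fintype.card_fin] at this
        exact_mod_cast this

lemma CC_zero {b t : ℤ} (hb : 0 < b) (ht : 0 < t) : CC b t 0 0 = 1 := by
  rw [CC, Finset.filter_true_of_mem, Finset.card_univ]
  · simp
  · intro s _
    constructor
    · exact pathHt_zero s
    · intro i hi
      have hi0 : i = 0 := by omega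
      subst hi0
      rw [pathHt_zero]
      constructor <;> omega

lemma CC_bound {b t : ℤ} {n : ℕ} {h : ℤ} (hh : (n:ℤ) < |h|) : CC b t n h = 0 := by
  rw [CC, Finset.card_eq_zero, Finset.filter_eq_empty_iff]
  rintro s - ⟨h1, -⟩
  have := pathHt_abs_le s n
  rw [h1] at this
  omega

lemma CC_bot {b t : ℤ} {n : ℕ} : CC b t n (-b) = 0 := by
  rw [CC, Finset.card_eq_zero, Finset.filter_eq_empty_iff]
  rintro s - ⟨h1, h2⟩
  exact (h2 n le_rfl).1 h1

lemma CC_top {b t : ℤ} {n : ℕ} : CC b t n t = 0 := by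
  rw [CC, Finset.card_eq_zero, Finset.filter_eq_empty_iff]
  rintro s - ⟨h1, h2⟩
  exact (h2 n le_rfl).2 h1

lemma CC_rec {b t : ℤ} {n : ℕ} {h : ℤ} (hb : -b < h) (ht : h < t) :
    CC b t (n+1) h = CC b t n (h-1) + CC b t n (h+1) := by
  classical
  rw [CC]
  rw [← Finset.card_filter_add_card_filter_not
    (p := fun s : Fin (n+1) → Bool => s (Fin.last n) = true)]
  congr 1
  · -- last step is up : previous height h - 1
    rw [Finset.filter_filter, CC]
    refine Finset.card_bij' (fun s _ => Fin.init s) (fun r _ => Fin.snoc r true) ?_ ?_ ?_ ?_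
    · rintro s hs
      rw [Finset.mem_filter] at hs ⊢
      obtain ⟨-, ⟨hend, havoid⟩, hlast⟩ := hs
      refine ⟨Finset.mem_univ _, ?_, ?_⟩
      · rw [pathHt_init s le_rfl]
        rw [pathHt_last s, hlast, if_pos rfl] at hend
        omega
      · intro i hi
        rw [pathHt_init s hi]
        exact havoid i (by omega)
    · rintro r hr
      rw [Finset.mem_filter] at hr ⊢
      obtain ⟨-, hend, havoid⟩ := hr
      refine ⟨Finset.mem_univ _, ⟨?_, ?_⟩, Fin.snoc_last _ _⟩
      · rw [pathHt_snoc_top, hend, if_pos rfl]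
        ring
      · intro i hi
        rcases Nat.lt_or_ge i (n+1) with hin | hin
        · rw [pathHt_snoc _ _ (by omega : i ≤ n)]
          exact havoid i (by omega)
        · have : i = n + 1 := by omega
          subst this
          rw [pathHt_snoc_top, hend, if_pos rfl]
          constructor <;> omega
    · intro s hs
      rw [Finset.mem_filter] at hs
      obtain ⟨-, -, hlast⟩ := hs
      calc Fin.snoc (Fin.init s) true = Fin.snoc (Fin.init s) (s (Fin.last n)) := by rw [hlast]
        _ = s := Fin.snoc_init_self s
    · intro r _
      simp
  · -- last step is down : previous height h + 1
    rw [Finset.filter_filter, CC]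
    refine Finset.card_bij' (fun s _ => Fin.init s) (fun r _ => Fin.snoc r false) ?_ ?_ ?_ ?_
    · rintro s hs
      rw [Finset.mem_filter] at hs ⊢
      obtain ⟨-, ⟨hend, havoid⟩, hlast⟩ := hs
      rw [Bool.not_eq_true] at hlast
      refine ⟨Finset.mem_univ _, ?_, ?_⟩
      · rw [pathHt_init s le_rfl]
        rw [pathHt_last s, hlast, if_neg (by simp)] at hend
        omega
      · intro i hi
        rw [pathHt_init s hi]
        exact havoid i (by omega)
    · rintro r hr
      rw [Finset.mem_filter] at hr ⊢
      obtain ⟨-, hend, havoid⟩ := hr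
      refine ⟨Finset.mem_univ _, ⟨?_, ?_⟩, ?_⟩
      · rw [pathHt_snoc_top, hend, if_neg (by simp)]
        ring
      · intro i hi
        rcases Nat.lt_or_ge i (n+1) with hin | hin
        · rw [pathHt_snoc _ _ (by omega : i ≤ n)]
          exact havoid i (by omega)
        · have : i = n + 1 := by omega
          subst this
          rw [pathHt_snoc_top, hend, if_neg (by simp)]
          constructor <;> omega
      · simp [Fin.snoc_last]
    · intro s hs
      rw [Finset.mem_filter] at hs
      obtain ⟨-, -, hlast⟩ := hs
      rw [Bool.not_eq_true] at hlast
      calc Fin.snoc (Fin.init s) false = Fin.snoc (Fin.init s) (s (Fin.last n)) := by rw [hlast]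
        _ = s := Fin.snoc_init_self s
    · intro r _
      simp


lemma key_lemma (b t : ℤ) (hb : 0 < b) (ht : 0 < t) :
    ∀ n u d : ℕ, u + d = n → -b ≤ (u:ℤ) - d → (u:ℤ) - d ≤ t →
    ((CC b t n ((u:ℤ) - d) : ℤ)) = Fm b t u d := by
  intro n
  induction n with
  | zero =>
    intro u d hud _ _
    have hu : u = 0 := by omega
    have hd : d = 0 := by omega
    subst hu; subst hd
    rw [show ((0:ℕ):ℤ) - ((0:ℕ):ℤ) = 0 by norm_num, CC_zero hb ht, F_zero hb ht]
    norm_num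
  | succ n ih =>
    intro u d hud hge hle
    rcases eq_or_lt_of_le hge with hbot | hbot
    · rw [← hbot, CC_bot, F_bot hb ht hbot.symm]
      norm_num
    rcases eq_or_lt_of_le hle with htop | htop
    · rw [htop, CC_top, F_top hb ht htop]
      norm_num
    rw [CC_rec hbot htop]
    push_cast
    rcases Nat.eq_zero_or_pos u with hu0 | hu0
    · subst hu0
      have hd : d = n + 1 := by omega
      subst hd
      have hnb : (n:ℤ) + 1 < b := by
        push_cast at hbot
        omega
      have h1 : CC b t n (((0:ℕ):ℤ) - ((n+1:ℕ):ℤ) - 1) = 0 := by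
        apply CC_bound
        have : ((0:ℕ):ℤ) - ((n+1:ℕ):ℤ) - 1 = -((n:ℤ)+2) := by push_cast; ring
        rw [this, abs_neg, abs_of_pos (by omega)]
        omega
      have e2 : ((0:ℕ):ℤ) - ((n+1:ℕ):ℤ) + 1 = ((0:ℕ):ℤ) - ((n:ℕ):ℤ) := by push_cast; ring
      have h2 : ((CC b t n (((0:ℕ):ℤ) - ((n+1:ℕ):ℤ) + 1) : ℤ)) = Fm b t 0 n := by
        rw [e2]
        exact ih 0 n (by omega) (by push_cast; omega) (by push_cast; omega)
      rw [h1, h2, F_left hb ht hnb]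
      norm_num
    rcases Nat.eq_zero_or_pos d with hd0 | hd0
    · subst hd0
      have hu : u = n + 1 := by omega
      subst hu
      have hnt : (n:ℤ) + 1 < t := by
        push_cast at htop
        omega
      have h1 : CC b t n (((n+1:ℕ):ℤ) - ((0:ℕ):ℤ) + 1) = 0 := by
        apply CC_bound
        have : ((n+1:ℕ):ℤ) - ((0:ℕ):ℤ) + 1 = (n:ℤ)+2 := by push_cast; ring
        rw [this, abs_of_pos (by omega)]
        omega
      have e2 : ((n+1:ℕ):ℤ) - ((0:ℕ):ℤ) - 1 = ((n:ℕ):ℤ) - ((0:ℕ):ℤ) := by push_cast; ring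
      have h2 : ((CC b t n (((n+1:ℕ):ℤ) - ((0:ℕ):ℤ) - 1) : ℤ)) = Fm b t n 0 := by
        rw [e2]
        exact ih n 0 (by omega) (by push_cast; omega) (by push_cast; omega)
      rw [h1, h2, F_right hb ht hnt]
      norm_num
    · obtain ⟨u', rfl⟩ : ∃ u', u = u' + 1 := ⟨u - 1, by omega⟩
      obtain ⟨d', rfl⟩ : ∃ d', d = d' + 1 := ⟨d - 1, by omega⟩
      have e1 : ((u'+1:ℕ):ℤ) - ((d'+1:ℕ):ℤ) - 1 = ((u':ℕ):ℤ) - ((d'+1:ℕ):ℤ) := by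
        push_cast; ring
      have e2 : ((u'+1:ℕ):ℤ) - ((d'+1:ℕ):ℤ) + 1 = ((u'+1:ℕ):ℤ) - ((d':ℕ):ℤ) := by
        push_cast; ring
      have h1 : ((CC b t n (((u'+1:ℕ):ℤ) - ((d'+1:ℕ):ℤ) - 1) : ℤ)) = Fm b t u' (d'+1) := by
        rw [e1]
        refine ih u' (d'+1) (by omega) ?_ ?_
        · push_cast
          push_cast at hbot
          omega
        · push_cast
          push_cast at htop
          omega
      have h2 : ((CC b t n (((u'+1:ℕ):ℤ) - ((d'+1:ℕ):ℤ) + 1) : ℤ)) = Fm b t (u'+1) d' := by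
        rw [e2]
        refine ih (u'+1) d' (by omega) ?_ ?_
        · push_cast
          push_cast at hbot
          omega
        · push_cast
          push_cast at htop
          omega
      rw [h1, h2, F_rec hb ht u' d']

theorem mohanty_two_barriers (u d : ℕ) (b t : ℤ) (hb : 0 < b) (ht : 0 < t)
    (h1 : -b < (u : ℤ) - d) (h2 : (u : ℤ) - d < t) :
    ((Finset.univ.filter (fun s : Fin (u + d) → Bool =>
        pathHt s (u + d) = (u : ℤ) - d ∧
        ∀ i ≤ u + d, pathHt s i ≠ -b ∧ pathHt s i ≠ t)).card : ℤ)
      = ∑' k : ℤ,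
          (intChoose (u + d) ((u : ℤ) - k * (b + t))
            - intChoose (u + d) ((u : ℤ) - k * (b + t) + b)) := by
  exact key_lemma b t hb ht (u+d) u d rfl h1.le h2.le
end

section
/- The average height H(n,1) of Dyck paths of length 2n satisfies H(n,1) = (n+1)·(S(n,1) - 2·S(n,0) + S(n,-1)) - 1, where S(n,a) = Σ_{k≥1} d(k)·binomial(2n, n-k+a)/binomial(2n,n) and d(k) is the number of positive divisors of k. -/
open Finset

/-- A Dyck path of length `m`: it ends at height `0` and never goes below the x-axis. -/
def IsDyckPath {m : ℕ} (s : Fin m → Bool) : Prop :=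
  pathHt s m = 0 ∧ ∀ i ≤ m, 0 ≤ pathHt s i

instance {m : ℕ} (s : Fin m → Bool) : Decidable (IsDyckPath s) := by
  unfold IsDyckPath; infer_instance

/-- The height of a path of length `m`: the maximal `y`-coordinate attained. -/
def pathHeight {m : ℕ} (s : Fin m → Bool) : ℕ :=
  (Finset.range (m + 1)).sup (fun i => (pathHt s i).toNat)

/-- `S(n,a) = Σ_{k≥1} d(k)·binom(2n, n-k+a)/binom(2n,n)`. -/
noncomputable def S (n : ℕ) (a : ℤ) : ℝ :=
  ∑' k : ℕ, ((k + 1).divisors.card : ℝ) *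
    (intChoose (2 * n) ((n : ℤ) - (k + 1) + a) : ℝ) / ((2 * n).choose n : ℝ)

namespace AHD


lemma intChoose_pascal (ℓ : ℕ) (j : ℤ) :
    intChoose (ℓ + 1) j = intChoose ℓ j + intChoose ℓ (j - 1) := by
  unfold intChoose
  rcases lt_trichotomy j 0 with h | h | h
  · rw [if_neg (by omega), if_neg (by omega), if_neg (by omega)]; ring
  · subst h; simp [intChoose]
  · rw [if_pos (by omega), if_pos (by omega), if_pos (by omega)]
    have h1 : j.toNat = (j - 1).toNat + 1 := by omega
    rw [h1, Nat.choose_succ_succ']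
    push_cast; ring

lemma intChoose_eq_zero_of_lt {ℓ : ℕ} {j : ℤ} (h : (ℓ : ℤ) < j) : intChoose ℓ j = 0 := by
  unfold intChoose
  rw [if_pos (by omega), Nat.choose_eq_zero_of_lt (by omega)]
  simp

lemma intChoose_eq_zero_of_neg {ℓ : ℕ} {j : ℤ} (h : j < 0) : intChoose ℓ j = 0 := by
  unfold intChoose; rw [if_neg (by omega)]

lemma intChoose_symm (ℓ : ℕ) (j : ℤ) (hj : 0 ≤ j) (hj2 : j ≤ ℓ) :
    intChoose ℓ ((ℓ : ℤ) - j) = intChoose ℓ j := by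
  unfold intChoose
  rw [if_pos (by omega), if_pos hj]
  have : ((ℓ:ℤ) - j).toNat = ℓ - j.toNat := by omega
  rw [this, Nat.choose_symm (by omega)]



/-- Number of free ±1 walks of length ℓ from 0 to z. -/
def nf (ℓ : ℕ) (z : ℤ) : ℤ :=
  if ((ℓ : ℤ) + z) % 2 = 0 then intChoose ℓ (((ℓ : ℤ) + z) / 2) else 0

lemma nf_pascal (ℓ : ℕ) (z : ℤ) : nf (ℓ + 1) z = nf ℓ (z - 1) + nf ℓ (z + 1) := by
  unfold nf
  push_cast
  by_cases h : ((ℓ : ℤ) + 1 + z) % 2 = 0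
  · rw [if_pos h, if_pos (by omega), if_pos (by omega), intChoose_pascal]
    have e1 : ((ℓ:ℤ) + 1 + z) / 2 = ((ℓ:ℤ) + (z + 1)) / 2 := by omega
    have e2 : ((ℓ:ℤ) + 1 + z) / 2 - 1 = ((ℓ:ℤ) + (z - 1)) / 2 := by omega
    rw [e2, e1]; ring
  · rw [if_neg h, if_neg (by omega), if_neg (by omega)]; ring

lemma nf_symm (ℓ : ℕ) (z : ℤ) : nf ℓ (-z) = nf ℓ z := by
  unfold nf
  by_cases h : ((ℓ : ℤ) + z) % 2 = 0
  · rw [if_pos (by omega), if_pos h]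
    by_cases h2 : 0 ≤ ((ℓ:ℤ) + z) / 2 ∧ ((ℓ:ℤ) + z) / 2 ≤ ℓ
    · have := intChoose_symm ℓ (((ℓ:ℤ) + z) / 2) h2.1 h2.2
      have e : ((ℓ:ℤ) + -z) / 2 = (ℓ:ℤ) - ((ℓ:ℤ) + z)/2 := by omega
      rw [e, this]
    · rcases (by omega : ((ℓ:ℤ) + z)/2 < 0 ∨ (ℓ:ℤ) < ((ℓ:ℤ)+z)/2) with h3 | h3
      · rw [intChoose_eq_zero_of_neg h3, intChoose_eq_zero_of_lt (by omega)]
      · rw [intChoose_eq_zero_of_lt h3, intChoose_eq_zero_of_neg (by omega)]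
  · rw [if_neg (by omega), if_neg h]

lemma nf_eq_zero {ℓ : ℕ} {z : ℤ} (h : (ℓ : ℤ) < |z|) : nf ℓ z = 0 := by
  unfold nf
  by_cases hp : ((ℓ : ℤ) + z) % 2 = 0
  · rw [if_pos hp]
    rcases (by rcases abs_cases z with ⟨e,_⟩|⟨e,_⟩ <;> omega : z < -(ℓ:ℤ) ∨ (ℓ:ℤ) < z) with h3 | h3
    · exact intChoose_eq_zero_of_neg (by omega)
    · exact intChoose_eq_zero_of_lt (by omega)
  · rw [if_neg hp]

lemma nf_zero_left (z : ℤ) : nf 0 z = if z = 0 then 1 else 0 := by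
  unfold nf
  push_cast
  by_cases h : z = 0
  · subst h; simp [intChoose]
  · rw [if_neg h]
    by_cases hp : ((0:ℤ) + z) % 2 = 0
    · rw [if_pos hp]
      rcases lt_trichotomy z 0 with h3 | h3 | h3
      · exact intChoose_eq_zero_of_neg (by omega)
      · omega
      · exact intChoose_eq_zero_of_lt (by omega)
    · rw [if_neg hp]

lemma nf_eval (n : ℕ) (j : ℤ) : nf (2 * n) (2 * j) = intChoose (2 * n) ((n : ℤ) + j) := by
  unfold nf
  rw [if_pos (by omega)]
  congr 1
  omega


lemma neg_sum (g : ℤ → ℤ) (K : ℕ) :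
    ∑ k ∈ Finset.Icc (-(K:ℤ)) (K:ℤ), g (-k) = ∑ k ∈ Finset.Icc (-(K:ℤ)) (K:ℤ), g k := by
  have himg : (Finset.Icc (-(K:ℤ)) (K:ℤ)).image (fun k => -k) = Finset.Icc (-(K:ℤ)) (K:ℤ) := by
    ext x; simp only [Finset.mem_image, Finset.mem_Icc]
    constructor
    · rintro ⟨a, ha, rfl⟩; omega
    · intro hx; exact ⟨-x, by omega, by omega⟩
  conv_rhs => rw [← himg]
  rw [Finset.sum_image (by intros a _ b _ h; simp only at h; omega)]

lemma shift_sum (g : ℤ → ℤ) (K : ℕ) (h1 : g (-(K:ℤ)) = 0) (h2 : g ((K:ℤ)+1) = 0) :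
    ∑ k ∈ Finset.Icc (-(K:ℤ)) (K:ℤ), g (1 - k) = ∑ k ∈ Finset.Icc (-(K:ℤ)) (K:ℤ), g k := by
  have himg : (Finset.Icc (-(K:ℤ)) (K:ℤ)).image (fun k => 1 - k)
      = Finset.Icc (1-(K:ℤ)) ((K:ℤ)+1) := by
    ext x; simp only [Finset.mem_image, Finset.mem_Icc]
    constructor
    · rintro ⟨a, ha, rfl⟩; omega
    · intro hx; exact ⟨1 - x, by omega, by omega⟩
  have e1 : ∑ k ∈ Finset.Icc (-(K:ℤ)) (K:ℤ), g (1 - k)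
      = ∑ j ∈ Finset.Icc (1-(K:ℤ)) ((K:ℤ)+1), g j := by
    rw [← himg, Finset.sum_image (by intros a _ b _ h; simp only at h; omega)]
  have eA : Finset.Icc (-(K:ℤ)) ((K:ℤ)+1) = insert ((K:ℤ)+1) (Finset.Icc (-(K:ℤ)) (K:ℤ)) := by
    ext x; simp only [Finset.mem_insert, Finset.mem_Icc]; omega
  have eB : Finset.Icc (-(K:ℤ)) ((K:ℤ)+1) = insert (-(K:ℤ)) (Finset.Icc (1-(K:ℤ)) ((K:ℤ)+1)) := by
    ext x; simp only [Finset.mem_insert, Finset.mem_Icc]; omega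
  have hA : ∑ j ∈ Finset.Icc (-(K:ℤ)) ((K:ℤ)+1), g j
      = ∑ j ∈ Finset.Icc (-(K:ℤ)) (K:ℤ), g j := by
    rw [eA, Finset.sum_insert (by simp only [Finset.mem_Icc]; omega), h2, zero_add]
  have hB : ∑ j ∈ Finset.Icc (-(K:ℤ)) ((K:ℤ)+1), g j
      = ∑ j ∈ Finset.Icc (1-(K:ℤ)) ((K:ℤ)+1), g j := by
    rw [eB, Finset.sum_insert (by simp only [Finset.mem_Icc]; omega), h1, zero_add]
  rw [e1, ← hB, hA]

/-- Reflection sum counting walks in the strip `[0, m-2]`. -/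
noncomputable def Gf (K : ℕ) (m : ℤ) (ℓ : ℕ) (y : ℤ) : ℤ :=
  ∑ k ∈ Finset.Icc (-(K:ℤ)) (K:ℤ), (nf ℓ (y + 2*k*m) - nf ℓ (-2 - y + 2*k*m))

lemma Gf_pascal (K : ℕ) (m : ℤ) (ℓ : ℕ) (y : ℤ) :
    Gf K m (ℓ + 1) y = Gf K m ℓ (y - 1) + Gf K m ℓ (y + 1) := by
  unfold Gf
  rw [← Finset.sum_add_distrib]
  refine Finset.sum_congr rfl fun k _ => ?_
  rw [nf_pascal, nf_pascal]
  have e1 : y + 2*k*m - 1 = y - 1 + 2*k*m := by ring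
  have e2 : y + 2*k*m + 1 = y + 1 + 2*k*m := by ring
  have e3 : -2 - y + 2*k*m - 1 = -2 - (y + 1) + 2*k*m := by ring
  have e4 : -2 - y + 2*k*m + 1 = -2 - (y - 1) + 2*k*m := by ring
  rw [e1, e2, e3, e4]; ring

lemma Gf_neg_one (K : ℕ) (m : ℤ) (ℓ : ℕ) : Gf K m ℓ (-1) = 0 := by
  unfold Gf
  refine Finset.sum_eq_zero fun k _ => ?_
  have : -2 - (-1 : ℤ) + 2*k*m = -1 + 2*k*m := by ring
  rw [this]; ring

lemma Gf_top (K : ℕ) (m : ℤ) (ℓ : ℕ) (hm : 2 ≤ m)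
    (hbig : (ℓ : ℤ) < (2*(K:ℤ) - 1)*m + 1) : Gf K m ℓ (m - 1) = 0 := by
  unfold Gf
  rw [Finset.sum_sub_distrib, sub_eq_zero]
  set g : ℤ → ℤ := fun k => nf ℓ (-(m-1) + 2*k*m) with hg
  have hfirst : ∀ k : ℤ, nf ℓ (m - 1 + 2*k*m) = g (-k) := by
    intro k
    have : -(m - 1 + 2*k*m) = -(m-1) + 2*(-k)*m := by ring
    rw [← nf_symm, this]
  have hsecond : ∀ k : ℤ, nf ℓ (-2 - (m - 1) + 2*k*m) = g (1 - k) := by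
    intro k
    have : -(-2 - (m - 1) + 2*k*m) = -(m-1) + 2*(1-k)*m := by ring
    rw [← nf_symm, this]
  have h1 : g (-(K:ℤ)) = 0 := by
    apply nf_eq_zero
    have : -(m-1) + 2*(-(K:ℤ))*m = -((2*(K:ℤ)+1)*m - 1) := by ring
    rw [this, abs_neg, abs_of_pos (by nlinarith)]
    nlinarith
  have h2 : g ((K:ℤ)+1) = 0 := by
    apply nf_eq_zero
    have : -(m-1) + 2*((K:ℤ)+1)*m = (2*(K:ℤ)+1)*m + 1 := by ring
    rw [this, abs_of_pos (by nlinarith)]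
    nlinarith
  calc ∑ k ∈ Finset.Icc (-(K:ℤ)) (K:ℤ), nf ℓ (m - 1 + 2*k*m)
      = ∑ k ∈ Finset.Icc (-(K:ℤ)) (K:ℤ), g (-k) := Finset.sum_congr rfl fun k _ => hfirst k
    _ = ∑ k ∈ Finset.Icc (-(K:ℤ)) (K:ℤ), g k := neg_sum g K
    _ = ∑ k ∈ Finset.Icc (-(K:ℤ)) (K:ℤ), g (1 - k) := (shift_sum g K h1 h2).symm
    _ = _ := Finset.sum_congr rfl fun k _ => (hsecond k).symm

lemma Gf_base (K : ℕ) (m : ℤ) (y : ℤ) (hm : 2 ≤ m) (hy1 : -1 ≤ y) (hy2 : y ≤ m - 1) :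
    Gf K m 0 y = if y = 0 then 1 else 0 := by
  unfold Gf
  have key : ∀ k ∈ Finset.Icc (-(K:ℤ)) (K:ℤ),
      nf 0 (y + 2*k*m) - nf 0 (-2 - y + 2*k*m) = if k = 0 then (if y = 0 then (1:ℤ) else 0) else 0 := by
    intro k _
    rw [nf_zero_left, nf_zero_left]
    by_cases hk : k = 0
    · subst hk
      rw [if_pos rfl, if_neg (by omega : ¬(-2 - y + 2*0*m = 0)), sub_zero]
      have e : y + 2*0*m = y := by ring
      rw [e]
    · rw [if_neg hk]
      rcases (by omega : 1 ≤ k ∨ k ≤ -1) with hk1 | hk1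
      · have hkm : 2*m ≤ 2*k*m := by nlinarith
        rw [if_neg (by omega), if_neg (by omega)]; ring
      · have hkm : 2*k*m ≤ -(2*m) := by nlinarith
        rw [if_neg (by omega), if_neg (by omega)]; ring
  calc ∑ k ∈ Finset.Icc (-(K:ℤ)) (K:ℤ), (nf 0 (y + 2*k*m) - nf 0 (-2 - y + 2*k*m))
      = ∑ k ∈ Finset.Icc (-(K:ℤ)) (K:ℤ), (if k = 0 then (if y = 0 then (1:ℤ) else 0) else 0) :=
        Finset.sum_congr rfl key
    _ = if y = 0 then 1 else 0 := by
        rw [Finset.sum_eq_single_of_mem 0 (by simp only [Finset.mem_Icc]; omega)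
          (fun b _ hb => if_neg hb), if_pos rfl]


def stepv (b : Bool) : ℤ := if b then 1 else -1

lemma pathHt_eq {m : ℕ} (s : Fin m → Bool) {i : ℕ} (hi : i ≤ m) :
    pathHt s i = ∑ j : Fin i, stepv (s (Fin.castLE hi j)) := by
  unfold pathHt
  refine Finset.sum_bij' (fun (j : Fin m) hj => (⟨(j : ℕ), by simpa using hj⟩ : Fin i))
    (fun (j : Fin i) _ => Fin.castLE hi j) (fun a ha => Finset.mem_univ _) ?_
    (fun a ha => Fin.ext rfl) (fun a ha => Fin.ext rfl) (fun a ha => rfl)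
  intro a ha
  simp only [Finset.mem_filter, Finset.mem_univ, true_and]
  exact a.2

lemma pathHt_zero {m : ℕ} (s : Fin m → Bool) : pathHt s 0 = 0 := by
  unfold pathHt
  rw [Finset.filter_false_of_mem (by intro x _; omega), Finset.sum_empty]

lemma pathHt_succ {m : ℕ} (s : Fin m → Bool) {i : ℕ} (hi : i < m) :
    pathHt s (i + 1) = pathHt s i + stepv (s ⟨i, hi⟩) := by
  rw [pathHt_eq s (show i + 1 ≤ m from hi), pathHt_eq s (le_of_lt hi), Fin.sum_univ_castSucc]
  congr 1

lemma pathHt_le_self {m : ℕ} (s : Fin m → Bool) {i : ℕ} (hi : i ≤ m) :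
    pathHt s i ≤ i := by
  rw [pathHt_eq s hi]
  calc ∑ j : Fin i, stepv (s (Fin.castLE hi j)) ≤ ∑ _j : Fin i, (1:ℤ) := by
        apply Finset.sum_le_sum
        intro j _
        unfold stepv; split <;> omega
    _ = i := by simp

lemma pathHt_le_of_end_zero {m : ℕ} (s : Fin m → Bool) (h0 : pathHt s m = 0)
    {i : ℕ} (hi : i ≤ m) : 2 * pathHt s i ≤ m := by
  have key : ∀ d : ℕ, ∀ i : ℕ, i + d ≤ m → pathHt s i ≤ pathHt s (i + d) + d := by
    intro d
    induction d with
    | zero => intro i _; simp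
    | succ d ih =>
      intro i hid
      have h1 : pathHt s (i + d + 1) = pathHt s (i + d) + stepv (s ⟨i + d, by omega⟩) :=
        pathHt_succ s (by omega)
      have h2 := ih i (by omega)
      have h3 : -1 ≤ stepv (s ⟨i + d, by omega⟩) := by unfold stepv; split <;> omega
      have : i + (d + 1) = (i + d) + 1 := by omega
      rw [this, h1]
      push_cast
      omega
  have := key (m - i) i (by omega)
  rw [(by omega : i + (m - i) = m), h0] at this
  have := pathHt_le_self s hi
  omega

lemma pathHt_snoc {ℓ : ℕ} (t : Fin ℓ → Bool) (b : Bool) {i : ℕ} (hi : i ≤ ℓ) :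
    pathHt (Fin.snoc t b) i = pathHt t i := by
  rw [pathHt_eq _ (by omega : i ≤ ℓ + 1), pathHt_eq t hi]
  apply Finset.sum_congr rfl
  intro j _
  congr 1
  have : Fin.castLE (by omega : i ≤ ℓ + 1) j = Fin.castSucc (Fin.castLE hi j) := by
    apply Fin.ext; rfl
  rw [this, Fin.snoc_castSucc]

lemma pathHt_snoc_last {ℓ : ℕ} (t : Fin ℓ → Bool) (b : Bool) :
    pathHt (Fin.snoc t b) (ℓ + 1) = pathHt t ℓ + stepv b := by
  rw [pathHt_succ (Fin.snoc t b) (by omega : ℓ < ℓ + 1), pathHt_snoc t b le_rfl]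
  congr 1
  have : (⟨ℓ, by omega⟩ : Fin (ℓ + 1)) = Fin.last ℓ := rfl
  rw [this, Fin.snoc_last]

/-- Paths of length ℓ from 0 to y staying within [0, H]. -/
def Dset (ℓ H : ℕ) (y : ℤ) : Finset (Fin ℓ → Bool) :=
  Finset.univ.filter (fun s => pathHt s ℓ = y ∧ ∀ i ≤ ℓ, 0 ≤ pathHt s i ∧ pathHt s i ≤ H)

lemma card_Dset_zero (H : ℕ) (y : ℤ) : (Dset 0 H y).card = if y = 0 then 1 else 0 := by
  unfold Dset
  by_cases hy : y = 0
  · subst hy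
    rw [if_pos rfl]
    rw [Finset.filter_true_of_mem, Finset.card_univ]
    · simp [Fintype.card_fun]
    · intro s _
      refine ⟨pathHt_zero s, ?_⟩
      intro i hi
      have : i = 0 := by omega
      subst this
      rw [pathHt_zero]
      exact ⟨le_rfl, by positivity⟩
  · rw [if_neg hy]
    rw [Finset.card_eq_zero, Finset.filter_eq_empty_iff]
    intro s _
    rw [pathHt_zero]
    tauto


lemma mem_Dset {ℓ H : ℕ} {y : ℤ} {s : Fin ℓ → Bool} :
    s ∈ Dset ℓ H y ↔ pathHt s ℓ = y ∧ ∀ i ≤ ℓ, 0 ≤ pathHt s i ∧ pathHt s i ≤ H := by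
  unfold Dset
  simp only [Finset.mem_filter, Finset.mem_univ, true_and]

lemma card_filter_last (ℓ H : ℕ) (y : ℤ) (b : Bool) (hy0 : 0 ≤ y) (hyH : y ≤ (H:ℤ)) :
    ((Dset (ℓ+1) H y).filter (fun s => s (Fin.last ℓ) = b)).card
      = (Dset ℓ H (y - stepv b)).card := by
  refine Finset.card_bij' (fun s _ => Fin.init s) (fun t _ => Fin.snoc t b) ?hi ?hj ?li ?ri
  case hi =>
    intro s hs
    simp only [Finset.mem_filter] at hs
    obtain ⟨hs, hlast⟩ := hs
    rw [mem_Dset] at hs ⊢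
    obtain ⟨hend, hstay⟩ := hs
    have hsnoc : Fin.snoc (Fin.init s) (s (Fin.last ℓ)) = s := Fin.snoc_init_self s
    constructor
    · have h1 := pathHt_snoc_last (Fin.init s) (s (Fin.last ℓ))
      rw [hsnoc, hlast] at h1
      rw [hend] at h1
      linarith
    · intro i hi
      have e : pathHt (Fin.init s) i = pathHt s i := by
        conv_rhs => rw [← hsnoc]
        rw [pathHt_snoc _ _ hi]
      rw [e]
      exact hstay i (by omega)
  case hj =>
    intro t ht
    rw [mem_Dset] at ht
    obtain ⟨hend, hstay⟩ := ht
    simp only [Finset.mem_filter]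
    refine ⟨?_, by simp⟩
    rw [mem_Dset]
    constructor
    · rw [pathHt_snoc_last, hend]; ring
    · intro i hi
      rcases Nat.lt_or_ge i (ℓ+1) with hi2 | hi2
      · rw [pathHt_snoc t b (by omega)]
        exact hstay i (by omega)
      · have : i = ℓ + 1 := by omega
        subst this
        rw [pathHt_snoc_last, hend]
        constructor <;> omega
  case li =>
    intro s hs
    simp only [Finset.mem_filter] at hs
    have h := Fin.snoc_init_self s
    rw [hs.2] at h
    exact h
  case ri =>
    intro t ht
    simp

lemma card_Dset_succ (ℓ H : ℕ) (y : ℤ) :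
    (Dset (ℓ+1) H y).card = if 0 ≤ y ∧ y ≤ (H:ℤ) then
      (Dset ℓ H (y - 1)).card + (Dset ℓ H (y + 1)).card else 0 := by
  by_cases hy : 0 ≤ y ∧ y ≤ (H:ℤ)
  · rw [if_pos hy]
    have hsplit := Finset.card_filter_add_card_filter_not
      (s := Dset (ℓ+1) H y) (p := fun s => s (Fin.last ℓ) = true)
    have h1 := card_filter_last ℓ H y true hy.1 hy.2
    have h2 := card_filter_last ℓ H y false hy.1 hy.2
    have e1 : y - stepv true = y - 1 := by unfold stepv; norm_num
    have e2 : y - stepv false = y + 1 := by unfold stepv; norm_num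
    rw [e1] at h1
    rw [e2] at h2
    have efilter : (Dset (ℓ+1) H y).filter (fun s => ¬(s (Fin.last ℓ) = true))
        = (Dset (ℓ+1) H y).filter (fun s => s (Fin.last ℓ) = false) := by
      apply Finset.filter_congr
      intro s _
      simp
    rw [efilter] at hsplit
    rw [← h1, ← h2]
    exact hsplit.symm
  · rw [if_neg hy]
    rw [Finset.card_eq_zero, Finset.eq_empty_iff_forall_notMem]
    intro s
    rw [mem_Dset]
    rintro ⟨hend, hstay⟩
    have := hstay (ℓ+1) le_rfl
    rw [hend] at this
    tauto


lemma card_Dset_eq_Gf (n H : ℕ) : ∀ ℓ, ℓ ≤ 2*n → ∀ y : ℤ, -1 ≤ y → y ≤ (H:ℤ)+1 →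
    ((Dset ℓ H y).card : ℤ) = Gf (n+1) ((H:ℤ)+2) ℓ y := by
  intro ℓ
  induction ℓ with
  | zero =>
    intro _ y hy1 hy2
    rw [card_Dset_zero, Gf_base (n+1) ((H:ℤ)+2) y (by omega) hy1 (by omega)]
    split <;> simp
  | succ ℓ ih =>
    intro hℓ y hy1 hy2
    rcases (by omega : y = -1 ∨ y = (H:ℤ)+1 ∨ (0 ≤ y ∧ y ≤ (H:ℤ))) with rfl | rfl | hy
    · rw [card_Dset_succ, if_neg (by omega), Gf_neg_one]
      simp
    · rw [card_Dset_succ, if_neg (by omega)]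
      have := Gf_top (n+1) ((H:ℤ)+2) (ℓ+1) (by omega) (by push_cast; nlinarith [Int.ofNat_nonneg H])
      rw [show (H:ℤ)+2-1 = (H:ℤ)+1 by ring] at this
      rw [this]
      simp
    · rw [card_Dset_succ, if_pos hy, Gf_pascal]
      push_cast
      rw [ih (by omega) (y-1) (by omega) (by omega), ih (by omega) (y+1) (by omega) (by omega)]

lemma Gf_eval (n : ℕ) (K : ℕ) (m : ℤ) :
    Gf K m (2*n) 0 = ∑ k ∈ Finset.Icc (-(K:ℤ)) (K:ℤ),
      (intChoose (2*n) ((n:ℤ) + k*m) - intChoose (2*n) ((n:ℤ) - 1 + k*m)) := by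
  unfold Gf
  refine Finset.sum_congr rfl fun k _ => ?_
  have e1 : (0:ℤ) + 2*k*m = 2*(k*m) := by ring
  have e2 : -2 - 0 + 2*k*m = 2*(k*m - 1) := by ring
  rw [e1, e2, nf_eval, nf_eval]
  congr 2
  ring

lemma intChoose_mirror (n : ℕ) (j : ℤ) (hj : 0 ≤ j) :
    intChoose (2*n) ((n:ℤ) + j) = intChoose (2*n) ((n:ℤ) - j) := by
  rcases le_or_gt j n with h | h
  · have := intChoose_symm (2*n) ((n:ℤ) + j) (by omega) (by push_cast; omega)
    rw [show ((2*n:ℕ):ℤ) - ((n:ℤ) + j) = (n:ℤ) - j by push_cast; ring] at this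
    exact this.symm
  · rw [intChoose_eq_zero_of_lt (by push_cast; omega), intChoose_eq_zero_of_neg (by omega)]

def Ff (n : ℕ) (j : ℤ) : ℤ :=
  intChoose (2*n) ((n:ℤ) + 1 - j) - 2 * intChoose (2*n) ((n:ℤ) - j)
    + intChoose (2*n) ((n:ℤ) - 1 - j)

lemma D_sub_Gf (n : ℕ) (m : ℤ) (hm : 2 ≤ m) :
    (intChoose (2*n) (n:ℤ) - intChoose (2*n) ((n:ℤ)-1)) - Gf (n+1) m (2*n) 0
      = ∑ k ∈ Finset.Icc (1:ℤ) ((n:ℤ)+1), Ff n (k*m) := by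
  rw [Gf_eval]
  set g : ℤ → ℤ := fun k => intChoose (2*n) ((n:ℤ) + k*m) - intChoose (2*n) ((n:ℤ) - 1 + k*m)
    with hg
  have hsplit : Finset.Icc (-((n:ℤ)+1)) ((n:ℤ)+1)
      = Finset.Icc (-((n:ℤ)+1)) (-1) ∪ Finset.Icc 0 ((n:ℤ)+1) := by
    ext x; simp only [Finset.mem_union, Finset.mem_Icc]; omega
  have hdisj : Disjoint (Finset.Icc (-((n:ℤ)+1)) (-1)) (Finset.Icc (0:ℤ) ((n:ℤ)+1)) := by
    rw [Finset.disjoint_left]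
    intro a ha hb
    simp only [Finset.mem_Icc] at ha hb
    omega
  have hins : Finset.Icc (0:ℤ) ((n:ℤ)+1) = insert 0 (Finset.Icc 1 ((n:ℤ)+1)) := by
    ext x; simp only [Finset.mem_insert, Finset.mem_Icc]; omega
  have hneg : ∑ k ∈ Finset.Icc (-((n:ℤ)+1)) (-1), g k
      = ∑ k ∈ Finset.Icc (1:ℤ) ((n:ℤ)+1), g (-k) := by
    have himg : (Finset.Icc (1:ℤ) ((n:ℤ)+1)).image (fun k => -k)
        = Finset.Icc (-((n:ℤ)+1)) (-1) := by
      ext x; simp only [Finset.mem_image, Finset.mem_Icc]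
      constructor
      · rintro ⟨a, ha, rfl⟩; omega
      · intro hx; exact ⟨-x, by omega, by omega⟩
    rw [← himg, Finset.sum_image (by intros a _ b _ h; simp only at h; omega)]
  have hcast : ((n:ℤ)+1) = ((n+1 : ℕ) : ℤ) := by push_cast; ring
  have hK : (Finset.Icc (-((n+1:ℕ):ℤ)) ((n+1:ℕ):ℤ)) = Finset.Icc (-((n:ℤ)+1)) ((n:ℤ)+1) := by
    rw [← hcast]
  rw [hK, hsplit, Finset.sum_union hdisj, hins,
    Finset.sum_insert (by simp only [Finset.mem_Icc]; omega), hneg]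
  have hg0 : g 0 = intChoose (2*n) (n:ℤ) - intChoose (2*n) ((n:ℤ)-1) := by
    rw [hg]; simp only
    congr 2 <;> ring
  have hterm : ∀ k ∈ Finset.Icc (1:ℤ) ((n:ℤ)+1), g (-k) + g k = - Ff n (k*m) := by
    intro k hk
    simp only [Finset.mem_Icc] at hk
    have hkm : 2 ≤ k*m := by nlinarith
    rw [hg]; simp only
    unfold AHD.Ff
    have e1 : (n:ℤ) + -k*m = (n:ℤ) - k*m := by ring
    have e2 : (n:ℤ) - 1 + -k*m = (n:ℤ) - 1 - k*m := by ring
    rw [e1, e2]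
    have m1 := intChoose_mirror n (k*m) (by omega)
    have m2 := intChoose_mirror n (k*m - 1) (by omega)
    rw [show (n:ℤ) + (k*m - 1) = (n:ℤ) - 1 + k*m by ring,
        show (n:ℤ) - (k*m - 1) = (n:ℤ) + 1 - k*m by ring] at m2
    rw [m1, m2]
    ring
  have hx : ∑ k ∈ Finset.Icc (1:ℤ) ((n:ℤ)+1), g (-k) + ∑ k ∈ Finset.Icc (1:ℤ) ((n:ℤ)+1), g k
      = - ∑ k ∈ Finset.Icc (1:ℤ) ((n:ℤ)+1), Ff n (k*m) := by
    rw [← Finset.sum_add_distrib, Finset.sum_congr rfl hterm]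
    exact Finset.sum_neg_distrib _
  show intChoose (2*n) (n:ℤ) - intChoose (2*n) ((n:ℤ)-1)
      - (∑ k ∈ Finset.Icc (1:ℤ) ((n:ℤ)+1), g (-k)
        + (g 0 + ∑ k ∈ Finset.Icc (1:ℤ) ((n:ℤ)+1), g k))
      = ∑ k ∈ Finset.Icc (1:ℤ) ((n:ℤ)+1), Ff n (k*m)
  rw [hg0] at *
  linarith [hx]

lemma Ff_eq_zero (n : ℕ) {j : ℤ} (h : (n:ℤ)+1 < j) : Ff n j = 0 := by
  unfold Ff
  rw [intChoose_eq_zero_of_neg (by omega), intChoose_eq_zero_of_neg (by omega),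
    intChoose_eq_zero_of_neg (by omega)]
  ring

lemma pathHeight_le_iff {M H : ℕ} (s : Fin M → Bool) :
    pathHeight s ≤ H ↔ ∀ i ≤ M, pathHt s i ≤ (H:ℤ) := by
  unfold pathHeight
  rw [Finset.sup_le_iff]
  constructor
  · intro hs i hi
    have := hs i (by rw [Finset.mem_range]; omega)
    omega
  · intro hs i hi
    rw [Finset.mem_range] at hi
    have := hs i (by omega)
    omega

lemma dyck_filter_eq (n H : ℕ) :
    Finset.univ.filter (fun s : Fin (2*n) → Bool => IsDyckPath s ∧ pathHeight s ≤ H)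
      = Dset (2*n) H 0 := by
  unfold Dset
  apply Finset.filter_congr
  intro s _
  unfold IsDyckPath
  rw [pathHeight_le_iff]
  constructor
  · rintro ⟨⟨h0, hpos⟩, hle⟩
    exact ⟨h0, fun i hi => ⟨hpos i hi, hle i hi⟩⟩
  · rintro ⟨h0, hcond⟩
    exact ⟨⟨h0, fun i hi => (hcond i hi).1⟩, fun i hi => (hcond i hi).2⟩

lemma dyck_eq_Dset (n : ℕ) :
    Finset.univ.filter (fun s : Fin (2*n) → Bool => IsDyckPath s) = Dset (2*n) n 0 := by
  unfold Dset
  apply Finset.filter_congr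
  intro s _
  unfold IsDyckPath
  constructor
  · rintro ⟨h0, hpos⟩
    refine ⟨h0, fun i hi => ⟨hpos i hi, ?_⟩⟩
    have := pathHt_le_of_end_zero s h0 hi
    push_cast at this ⊢
    omega
  · rintro ⟨h0, hcond⟩
    exact ⟨h0, fun i hi => (hcond i hi).1⟩

lemma dyck_height_le (n : ℕ) (s : Fin (2*n) → Bool) (hs : IsDyckPath s) :
    pathHeight s ≤ n := by
  rw [pathHeight_le_iff]
  intro i hi
  have := pathHt_le_of_end_zero s hs.1 hi
  push_cast at this ⊢
  omega

lemma sum_ite_height (n m : ℕ) (hm : m ≤ n) :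
    ∑ h ∈ Finset.range n, (if h < m then 1 else 0) = m := by
  rw [← Finset.card_filter]
  have : Finset.filter (fun h => h < m) (Finset.range n) = Finset.range m := by
    ext x
    simp only [Finset.mem_filter, Finset.mem_range]
    omega
  rw [this, Finset.card_range]

lemma D0_eq (n : ℕ) :
    ((Finset.univ.filter (fun s : Fin (2*n) → Bool => IsDyckPath s)).card : ℤ)
      = intChoose (2*n) (n:ℤ) - intChoose (2*n) ((n:ℤ)-1) := by
  rw [dyck_eq_Dset]
  rw [card_Dset_eq_Gf n n (2*n) le_rfl 0 (by omega) (by omega)]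
  have h := D_sub_Gf n ((n:ℤ)+2) (by omega)
  have hz : ∑ k ∈ Finset.Icc (1:ℤ) ((n:ℤ)+1), Ff n (k*((n:ℤ)+2)) = 0 := by
    apply Finset.sum_eq_zero
    intro k hk
    simp only [Finset.mem_Icc] at hk
    apply Ff_eq_zero
    nlinarith
  rw [hz] at h
  omega

/-- The key combinatorial identity. -/
theorem T_eq (n : ℕ) (hn : 1 ≤ n) :
    ((∑ s ∈ Finset.univ.filter (fun s : Fin (2*n) → Bool => IsDyckPath s),
        pathHeight s : ℕ) : ℤ)
      = ∑ j ∈ Finset.Icc 1 (n+1), (j.divisors.card : ℤ) * Ff n (j:ℤ)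
        - (intChoose (2*n) (n:ℤ) - intChoose (2*n) ((n:ℤ)-1)) := by
  classical
  set Dy := Finset.univ.filter (fun s : Fin (2*n) → Bool => IsDyckPath s) with hDy
  -- Step 1: decompose heights into indicator sums
  have h1 : ∑ s ∈ Dy, pathHeight s
      = ∑ h ∈ Finset.range n, (Dy.filter (fun s => h < pathHeight s)).card := by
    have hd : ∀ s ∈ Dy, pathHeight s
        = ∑ h ∈ Finset.range n, (if h < pathHeight s then 1 else 0) := by
      intro s hs
      rw [hDy, Finset.mem_filter] at hs
      rw [sum_ite_height n _ (dyck_height_le n s hs.2)]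
    rw [Finset.sum_congr rfl hd, Finset.sum_comm]
    refine Finset.sum_congr rfl fun h _ => ?_
    rw [Finset.card_filter]
  -- Step 2: complement counting
  have h2 : ∀ h : ℕ, ((Dy.filter (fun s => h < pathHeight s)).card : ℤ)
      = (Dy.card : ℤ) - ((Dset (2*n) h 0).card : ℤ) := by
    intro h
    have hsplit := Finset.card_filter_add_card_filter_not
      (s := Dy) (p := fun s => pathHeight s ≤ h)
    have e : Dy.filter (fun s => ¬ pathHeight s ≤ h)
        = Dy.filter (fun s => h < pathHeight s) := by
      apply Finset.filter_congr
      intro s _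
      constructor
      · intro hx; omega
      · intro hx; omega
    have e2 : Dy.filter (fun s => pathHeight s ≤ h) = Dset (2*n) h 0 := by
      rw [hDy, Finset.filter_filter]
      exact dyck_filter_eq n h
    rw [e, e2] at hsplit
    omega
  -- Step 3: reflection formula
  have h3 : ∀ h : ℕ, (Dy.card : ℤ) - ((Dset (2*n) h 0).card : ℤ)
      = ∑ k ∈ Finset.Icc (1:ℤ) ((n:ℤ)+1), Ff n (k*((h:ℤ)+2)) := by
    intro h
    rw [hDy, D0_eq n, card_Dset_eq_Gf n h (2*n) le_rfl 0 (by omega) (by omega)]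
    exact D_sub_Gf n ((h:ℤ)+2) (by omega)
  have h4 : ((∑ s ∈ Dy, pathHeight s : ℕ) : ℤ)
      = ∑ h ∈ Finset.range n, ∑ k ∈ Finset.Icc (1:ℤ) ((n:ℤ)+1), Ff n (k*((h:ℤ)+2)) := by
    rw [h1]
    push_cast
    refine Finset.sum_congr rfl fun h _ => ?_
    rw [h2 h, h3 h]
  -- Step 4: convert to a sum over pairs of naturals
  set P : Finset (ℕ × ℕ) := (Finset.Icc 2 (n+1)) ×ˢ (Finset.Icc 1 (n+1)) with hP
  have hinner : ∀ m' : ℕ, ∑ k ∈ Finset.Icc (1:ℤ) ((n:ℤ)+1), Ff n (k*(m':ℤ))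
      = ∑ k ∈ Finset.Icc 1 (n+1), Ff n (((m'*k : ℕ)) : ℤ) := by
    intro m'
    have himg : (Finset.Icc (1:ℕ) (n+1)).image (fun k : ℕ => (k:ℤ))
        = Finset.Icc (1:ℤ) ((n:ℤ)+1) := by
      ext x
      simp only [Finset.mem_image, Finset.mem_Icc]
      constructor
      · rintro ⟨a, ha, rfl⟩; omega
      · intro hx; exact ⟨x.toNat, by omega, by omega⟩
    rw [← himg, Finset.sum_image (by intros a _ b _ hab; simp only at hab; omega)]
    refine Finset.sum_congr rfl fun k _ => ?_
    congr 1
    push_cast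
    ring
  have h5 : ∑ h ∈ Finset.range n, ∑ k ∈ Finset.Icc (1:ℤ) ((n:ℤ)+1), Ff n (k*((h:ℤ)+2))
      = ∑ p ∈ P, Ff n (((p.1*p.2 : ℕ)) : ℤ) := by
    rw [hP, Finset.sum_product]
    have houter : (Finset.range n).image (fun h => h + 2) = Finset.Icc 2 (n+1) := by
      ext x
      simp only [Finset.mem_image, Finset.mem_range, Finset.mem_Icc]
      constructor
      · rintro ⟨a, ha, rfl⟩; omega
      · intro hx; exact ⟨x - 2, by omega, by omega⟩
    rw [← houter, Finset.sum_image (by intros a _ b _ hab; simp only at hab; omega)]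
    refine Finset.sum_congr rfl fun h _ => ?_
    rw [show ((h:ℤ)+2) = (((h+2 : ℕ)):ℤ) by push_cast; ring, hinner (h+2)]
  -- Step 5: fiberwise grouping
  have hmaps : ∀ p ∈ P, p.1*p.2 ∈ Finset.Icc 1 ((n+1)*(n+1)) := by
    intro p hp
    rw [hP, Finset.mem_product] at hp
    simp only [Finset.mem_Icc] at hp ⊢
    obtain ⟨⟨h1a, h1b⟩, ⟨h2a, h2b⟩⟩ := hp
    constructor
    · nlinarith
    · nlinarith
  have h6 : ∑ p ∈ P, Ff n (((p.1*p.2 : ℕ)) : ℤ)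
      = ∑ j ∈ Finset.Icc 1 ((n+1)*(n+1)),
          ((P.filter (fun p => p.1*p.2 = j)).card : ℤ) * Ff n (j:ℤ) := by
    rw [← Finset.sum_fiberwise_of_maps_to hmaps]
    refine Finset.sum_congr rfl fun j hj => ?_
    have hc : ∀ p ∈ P.filter (fun p => p.1*p.2 = j), Ff n (((p.1*p.2 : ℕ)) : ℤ) = Ff n (j:ℤ) := by
      intro p hp
      rw [Finset.mem_filter] at hp
      rw [hp.2]
    rw [Finset.sum_congr rfl hc, Finset.sum_const, nsmul_eq_mul]
  -- Step 6: restrict to j ≤ n+1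
  have h7 : ∑ j ∈ Finset.Icc 1 ((n+1)*(n+1)),
        ((P.filter (fun p => p.1*p.2 = j)).card : ℤ) * Ff n (j:ℤ)
      = ∑ j ∈ Finset.Icc 1 (n+1),
        ((P.filter (fun p => p.1*p.2 = j)).card : ℤ) * Ff n (j:ℤ) := by
    symm
    apply Finset.sum_subset (Finset.Icc_subset_Icc le_rfl (by nlinarith))
    intro j hj hj2
    simp only [Finset.mem_Icc] at hj hj2
    rw [Ff_eq_zero n (by omega)]
    ring
  -- Step 7: fiber cardinality is d(j) - 1
  have h8 : ∀ j ∈ Finset.Icc 1 (n+1),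
      (P.filter (fun p => p.1*p.2 = j)).card = j.divisors.card - 1 := by
    intro j hj
    simp only [Finset.mem_Icc] at hj
    have hj0 : j ≠ 0 := by omega
    have hcard : (P.filter (fun p => p.1*p.2 = j)).card = (j.divisors.erase 1).card := by
      apply Finset.card_bij (fun p _ => p.1)
      · intro p hp
        rw [Finset.mem_filter, hP, Finset.mem_product] at hp
        obtain ⟨⟨hp1, hp2⟩, hpj⟩ := hp
        simp only [Finset.mem_Icc] at hp1 hp2
        rw [Finset.mem_erase, Nat.mem_divisors]
        exact ⟨by omega, ⟨p.2, hpj.symm⟩, hj0⟩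
      · intro p hp q hq hpq
        rw [Finset.mem_filter, hP, Finset.mem_product] at hp hq
        obtain ⟨⟨hp1, _⟩, hpj⟩ := hp
        obtain ⟨⟨hq1, _⟩, hqj⟩ := hq
        simp only [Finset.mem_Icc] at hp1 hq1
        have hp2q : p.2 = q.2 := by
          apply Nat.eq_of_mul_eq_mul_left (show 0 < p.1 by omega)
          rw [hpj, hpq, hqj]
        exact Prod.ext hpq hp2q
      · intro m hm
        rw [Finset.mem_erase, Nat.mem_divisors] at hm
        obtain ⟨hm1, hmd, _⟩ := hm
        have hm0 : 0 < m := Nat.pos_of_dvd_of_pos hmd (by omega)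
        have hmle : m ≤ j := Nat.le_of_dvd (by omega) hmd
        refine ⟨(m, j / m), ?_, rfl⟩
        rw [Finset.mem_filter, hP, Finset.mem_product]
        refine ⟨⟨?_, ?_⟩, Nat.mul_div_cancel' hmd⟩
        · simp only [Finset.mem_Icc]; omega
        · simp only [Finset.mem_Icc]
          constructor
          · exact (Nat.one_le_div_iff hm0).mpr hmle
          · calc j / m ≤ j := Nat.div_le_self j m
              _ ≤ n+1 := hj.2
    rw [hcard, Finset.card_erase_of_mem (Nat.one_mem_divisors.mpr hj0)]
  -- Step 8: telescoping
  have tele : ∑ j ∈ Finset.Icc 1 (n+1), Ff n (j:ℤ)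
      = intChoose (2*n) (n:ℤ) - intChoose (2*n) ((n:ℤ)-1) := by
    set Gg : ℕ → ℤ := fun j => intChoose (2*n) ((n:ℤ)-(j:ℤ)) - intChoose (2*n) ((n:ℤ)-1-(j:ℤ))
      with hGg
    have himg : (Finset.range (n+1)).image (fun i => i + 1) = Finset.Icc 1 (n+1) := by
      ext x
      simp only [Finset.mem_image, Finset.mem_range, Finset.mem_Icc]
      constructor
      · rintro ⟨a, ha, rfl⟩; omega
      · intro hx; exact ⟨x - 1, by omega, by omega⟩
    rw [← himg, Finset.sum_image (by intros a _ b _ hab; simp only at hab; omega)]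
    have hstep : ∀ i ∈ Finset.range (n+1), Ff n (((i+1 : ℕ)):ℤ) = Gg i - Gg (i+1) := by
      intro i _
      rw [hGg]
      simp only
      unfold AHD.Ff
      have c1 : (((i+1 : ℕ)):ℤ) = (i:ℤ)+1 := by push_cast; ring
      rw [c1]
      have r1 : (n:ℤ)+1-((i:ℤ)+1) = (n:ℤ)-(i:ℤ) := by ring
      have r2 : (n:ℤ)-((i:ℤ)+1) = (n:ℤ)-1-(i:ℤ) := by ring
      rw [r1, r2]
      ring
    rw [Finset.sum_congr rfl hstep, Finset.sum_range_sub' Gg]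
    rw [hGg]
    simp only
    have g0 : (n:ℤ)-((0:ℕ):ℤ) = (n:ℤ) := by push_cast; ring
    have g0Q : (n:ℤ)-1-((0:ℕ):ℤ) = (n:ℤ)-1 := by push_cast; ring
    have gN : intChoose (2*n) ((n:ℤ)-(((n+1:ℕ)):ℤ)) = 0 :=
      intChoose_eq_zero_of_neg (by push_cast; omega)
    have gNQ : intChoose (2*n) ((n:ℤ)-1-(((n+1:ℕ)):ℤ)) = 0 :=
      intChoose_eq_zero_of_neg (by push_cast; omega)
    rw [g0, g0Q, gN, gNQ]
    ring
  -- Final assembly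
  rw [h4, h5, h6, h7]
  have hfinal : ∑ j ∈ Finset.Icc 1 (n+1),
        ((P.filter (fun p => p.1*p.2 = j)).card : ℤ) * Ff n (j:ℤ)
      = ∑ j ∈ Finset.Icc 1 (n+1), ((j.divisors.card : ℤ) - 1) * Ff n (j:ℤ) := by
    refine Finset.sum_congr rfl fun j hj => ?_
    rw [h8 j hj]
    simp only [Finset.mem_Icc] at hj
    have hd1 : 1 ≤ j.divisors.card := by
      apply Finset.card_pos.mpr
      exact ⟨1, Nat.one_mem_divisors.mpr (by omega)⟩
    congr 1
    push_cast [hd1]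
    ring
  rw [hfinal]
  have hsub : ∑ j ∈ Finset.Icc 1 (n+1), ((j.divisors.card : ℤ) - 1) * Ff n (j:ℤ)
      = ∑ j ∈ Finset.Icc 1 (n+1), (j.divisors.card : ℤ) * Ff n (j:ℤ)
        - ∑ j ∈ Finset.Icc 1 (n+1), Ff n (j:ℤ) := by
    rw [← Finset.sum_sub_distrib]
    refine Finset.sum_congr rfl fun j _ => ?_
    ring
  rw [hsub, tele]

lemma S_eq_sum (n : ℕ) (a : ℤ) (ha : a ≤ 1) :
    S n a = (∑ k ∈ Finset.range (n+1), ((k + 1).divisors.card : ℝ) *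
      (intChoose (2 * n) ((n : ℤ) - ((k:ℤ) + 1) + a) : ℝ)) / ((2 * n).choose n : ℝ) := by
  unfold S
  rw [tsum_eq_sum (s := Finset.range (n+1)) ?h, Finset.sum_div]
  case h =>
    intro k hk
    rw [Finset.mem_range] at hk
    rw [intChoose_eq_zero_of_neg (by omega)]
    simp

lemma catalan_id (n : ℕ) (hn : 1 ≤ n) :
    ((n:ℤ)+1) * (intChoose (2*n) (n:ℤ) - intChoose (2*n) ((n:ℤ)-1))
      = ((2*n).choose n : ℤ) := by
  have h := Nat.choose_succ_right_eq (2*n) (n-1)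
  rw [show n - 1 + 1 = n by omega, show 2*n - (n-1) = n+1 by omega] at h
  have hc : (((2*n).choose n : ℕ) : ℤ) * (n:ℤ) = (((2*n).choose (n-1) : ℕ) : ℤ) * ((n:ℤ)+1) := by
    exact_mod_cast congrArg (Nat.cast : ℕ → ℤ) h
  have e1 : intChoose (2*n) (n:ℤ) = ((2*n).choose n : ℤ) := by
    unfold intChoose
    rw [if_pos (by omega)]
    have ht : ((n:ℤ)).toNat = n := by omega
    rw [ht]
  have e2 : intChoose (2*n) ((n:ℤ)-1) = ((2*n).choose (n-1) : ℤ) := by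
    unfold intChoose
    rw [if_pos (by omega)]
    have ht : ((n:ℤ)-1).toNat = n-1 := by omega
    rw [ht]
  rw [e1, e2]
  linear_combination hc


end AHD

theorem average_height_dyck_paths (n : ℕ) (hn : 1 ≤ n) :
    (∑ s ∈ Finset.univ.filter (fun s : Fin (2 * n) → Bool => IsDyckPath s),
        (pathHeight s : ℝ)) / (((2 * n).choose n : ℝ) / (n + 1))
      = (n + 1) * (S n 1 - 2 * S n 0 + S n (-1)) - 1 := by
  have hBpos : 0 < (2*n).choose n := Nat.choose_pos (by omega)
  set B : ℝ := ((2 * n).choose n : ℝ) with hB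
  have hB0 : B ≠ 0 := by
    rw [hB]; positivity
  set X : ℝ := S n 1 - 2 * S n 0 + S n (-1) with hX
  set W : ℤ := ∑ j ∈ Finset.Icc 1 (n+1), (j.divisors.card : ℤ) * AHD.Ff n (j:ℤ) with hW
  set D0 : ℤ := intChoose (2*n) (n:ℤ) - intChoose (2*n) ((n:ℤ)-1) with hD0
  -- S-combination
  have hScomb : B * X = (W : ℝ) := by
    rw [hX, AHD.S_eq_sum n 1 (by omega), AHD.S_eq_sum n 0 (by omega), AHD.S_eq_sum n (-1) (by omega)]
    rw [← hB]
    field_simp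
    rw [hW]
    push_cast
    have himg : (Finset.range (n+1)).image (fun k => k + 1) = Finset.Icc 1 (n+1) := by
      ext x
      simp only [Finset.mem_image, Finset.mem_range, Finset.mem_Icc]
      constructor
      · rintro ⟨a, ha, rfl⟩; omega
      · intro hx; exact ⟨x - 1, by omega, by omega⟩
    rw [← himg, Finset.sum_image (by intros a _ b _ hab; simp only at hab; omega)]
    rw [Finset.mul_sum, ← Finset.sum_sub_distrib, ← Finset.sum_add_distrib]
    refine Finset.sum_congr rfl fun k _ => ?_
    unfold AHD.Ff
    push_cast
    have aa : (n:ℤ) - ((k:ℤ)+1) + 1 = (n:ℤ)+1-((k:ℤ)+1) := by ring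
    have bb : (n:ℤ) - ((k:ℤ)+1) + -1 = (n:ℤ)-1-((k:ℤ)+1) := by ring
    rw [aa, bb]
    ring
  have hT := AHD.T_eq n hn
  have hcat := AHD.catalan_id n hn
  have hcatR : ((n:ℝ)+1) * (D0:ℝ) = B := by
    rw [hB, hD0]
    exact_mod_cast hcat
  have hnum : (∑ s ∈ Finset.univ.filter (fun s : Fin (2 * n) → Bool => IsDyckPath s),
      (pathHeight s : ℝ)) = ((W - D0 : ℤ) : ℝ) := by
    rw [← Nat.cast_sum]
    have hT2 : ((∑ s ∈ Finset.univ.filter (fun s : Fin (2 * n) → Bool => IsDyckPath s),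
        pathHeight s : ℕ) : ℤ) = W - D0 := hT
    exact_mod_cast hT2
  rw [hnum]
  push_cast
  have hn1 : ((n:ℝ)+1) ≠ 0 := by positivity
  field_simp
  linear_combination (-((n:ℝ)+1)) * hScomb - hcatR
end

section
/- For Re(s) > 1, π^{-s}·Γ(s)·Σ_{(k,l)∈Z²∖{(0,0)}} (k²+l²)^{-s} = ∫_0^∞ u^{s-1}(θ(u)² - 1) du, where θ(u) = Σ_{n∈Z} e^{-πn²u}. -/
/-!
Since `θ(u)² - 1 = ∑_{(k,l) ≠ 0} e^{-π(k²+l²)u}`, the Mellin transform can be taken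
term by term, because the Epstein series converges absolutely for `Re s > 1`;
the term `e^{-π(k²+l²)u}` transforms into `π^{-s} Γ(s) (k²+l²)^{-s}`.
-/

open Complex MeasureTheory

/-- Jacobi theta function `θ(u) = Σ_{n∈ℤ} e^{-πn²u}` for real `u`. -/
noncomputable def theta (u : ℝ) : ℝ :=
  ∑' n : ℤ, Real.exp (-Real.pi * (n : ℝ) ^ 2 * u)

open scoped Real

lemma summable_exp_neg_pi_mul_int_sq {t : ℝ} (ht : 0 < t) :
    Summable fun n : ℤ ↦ rexp (-π * n ^ 2 * t) := by
  have := ((summable_jacobiTheta₂_term_iff 0 (t * I)).mpr (by simpa using ht)).norm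
  simpa [norm_jacobiTheta₂_term] using this

def sumSq (p : ℤ × ℤ) : ℝ := (p.1 : ℝ) ^ 2 + (p.2 : ℝ) ^ 2

lemma sumSq_nonneg (p : ℤ × ℤ) : 0 ≤ sumSq p := by unfold sumSq; positivity

lemma sumSq_eq_zero_iff {p : ℤ × ℤ} : sumSq p = 0 ↔ p = 0 := by
  rw [sumSq, add_eq_zero_iff_of_nonneg (sq_nonneg _) (sq_nonneg _), Prod.ext_iff]
  simp

lemma hasSum_theta_sq {t : ℝ} (ht : 0 < t) :
    HasSum (fun p : ℤ × ℤ ↦ rexp (-π * sumSq p * t)) (theta t ^ 2) := by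
  have hs := summable_exp_neg_pi_mul_int_sq ht
  have hθ : HasSum _ (theta t) := hs.hasSum
  rw [sq]
  have hsq := hs.mul_of_nonneg hs (fun _ ↦ Real.exp_nonneg _) fun _ ↦ Real.exp_nonneg _
  refine (hθ.mul hθ hsq).congr_fun fun p ↦ ?_
  rw [← Real.exp_add, sumSq]
  ring_nf

lemma hasSum_theta_sq_sub_one {t : ℝ} (ht : 0 < t) :
    HasSum (fun p : ℤ × ℤ ↦ if sumSq p = 0 then 0 else rexp (-π * sumSq p * t))
      (theta t ^ 2 - 1) := by
  refine ((hasSum_theta_sq ht).sub (hasSum_ite_eq (0 : ℤ × ℤ) 1)).congr_fun fun p ↦ ?_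
  rcases eq_or_ne p 0 with rfl | hp
  · simp [sumSq]
  · simp [sumSq_eq_zero_iff, hp]

lemma sq_norm_le_sumSq (p : ℤ × ℤ) : ‖![p.1, p.2]‖ ^ 2 ≤ sumSq p := by
  have : ‖![p.1, p.2]‖ ≤ √(sumSq p) := by
    refine (pi_norm_le_iff_of_nonneg (Real.sqrt_nonneg _)).mpr fun i ↦ ?_
    fin_cases i <;> simp only [Int.norm_eq_abs] <;> apply Real.abs_le_sqrt <;>
      simp [sumSq, sq_nonneg]
  calc ‖![p.1, p.2]‖ ^ 2 ≤ √(sumSq p) ^ 2 := by gcongr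
    _ = sumSq p := Real.sq_sqrt (sumSq_nonneg p)

/-- Comparison with the sup norm on `ℤ²`, for which this is the Eisenstein series estimate. -/
lemma summable_sumSq_rpow_neg {r : ℝ} (hr : 1 < r) :
    Summable fun p : ℤ × ℤ ↦ sumSq p ^ (-r) := by
  have h := (EisensteinSeries.summable_one_div_norm_rpow (by linarith : 2 < 2 * r)).comp_injective
    (finTwoArrowEquiv ℤ).symm.injective
  refine h.of_nonneg_of_le (fun p ↦ Real.rpow_nonneg (sumSq_nonneg p) _) fun p ↦ ?_
  rcases eq_or_ne p 0 with rfl | hp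
  · simp only [sumSq, Prod.fst_zero, Prod.snd_zero, Int.cast_zero]
    rw [zero_pow two_ne_zero, add_zero, Real.zero_rpow (by linarith)]
    exact Real.rpow_nonneg (norm_nonneg _) _
  have hpos : 0 < ‖![p.1, p.2]‖ := by
    refine norm_pos_iff.mpr fun h ↦ hp ?_
    exact Prod.ext (congrFun h 0) (congrFun h 1)
  simp only [Function.comp_apply, finTwoArrowEquiv_symm_apply]
  rw [show -(2 * r) = 2 * -r by ring, Real.rpow_mul (norm_nonneg _), Real.rpow_two]
  exact Real.rpow_le_rpow_of_nonpos (pow_pos hpos 2) (sq_norm_le_sumSq p) (by linarith)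

lemma ite_intCast_cpow_neg_eq_one_div {s : ℂ} (hs : s ≠ 0) (p : ℤ × ℤ) :
    (if p ≠ 0 then ((p.1 ^ 2 + p.2 ^ 2 : ℤ) : ℂ) ^ (-s) else 0) = 1 / (sumSq p : ℂ) ^ s := by
  rcases eq_or_ne p 0 with rfl | hp
  · simp [sumSq, zero_cpow hs]
  · simp [hp, sumSq, cpow_neg]

theorem epstein_mellin_representation (s : ℂ) (hs : 1 < s.re) :
    (Real.pi : ℂ) ^ (-s) * Complex.Gamma s *
        (∑' p : ℤ × ℤ, if p ≠ 0 then ((p.1 ^ 2 + p.2 ^ 2 : ℤ) : ℂ) ^ (-s) else 0)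
      = ∫ u in Set.Ioi (0 : ℝ), (u : ℂ) ^ (s - 1) * ((theta u : ℂ) ^ 2 - 1) := by
  have hs₀ : 0 < s.re := by linarith
  have hF (t : ℝ) (ht : t ∈ Set.Ioi 0) : HasSum
      (fun p ↦ if sumSq p = 0 then 0 else 1 * (rexp (-π * sumSq p * t) : ℂ))
      ((theta t : ℂ) ^ 2 - 1) := by
    simpa [apply_ite] using hasSum_ofReal.mpr (hasSum_theta_sq_sub_one ht)
  have h_sum : Summable fun p ↦ ‖(1 : ℂ)‖ / sumSq p ^ s.re :=
    (summable_sumSq_rpow_neg hs).congr fun p ↦ by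
      rw [norm_one, Real.rpow_neg (sumSq_nonneg p), one_div]
  calc _ = ∑' p, π ^ (-s) * Gamma s * 1 / (sumSq p : ℂ) ^ s := by
        rw [← tsum_mul_left]
        refine tsum_congr fun p ↦ ?_
        rw [ite_intCast_cpow_neg_eq_one_div (ne_zero_of_re_pos hs₀), mul_one_div, mul_one]
    _ = mellin (fun t ↦ (theta t : ℂ) ^ 2 - 1) s :=
        (hasSum_mellin_pi_mul₀ sumSq_nonneg hs₀ hF h_sum).tsum_eq
    _ = _ := rfl
end

section
/- The function Z₀(s) := Σ_{(k,l)∈Z²∖{(0,0)}} (k²+l²)^{-s}, defined for Re(s) > 1, extends to a meromorphic function on C whose only pole is a simple pole at s = 1 with residue π. -/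
open Complex

section EpsteinAux

open Real Filter Asymptotics Set MeasureTheory

lemma epstein_hasSum_mul_sq {f : ℤ → ℂ} {S : ℂ} (h : HasSum f S)
    (hs : Summable fun n : ℤ => ‖f n‖) :
    HasSum (fun p : ℤ × ℤ => f p.1 * f p.2) (S * S) :=
  h.mul h (summable_mul_of_summable_norm hs hs)

/-- The square of the Jacobi theta function along the imaginary axis. -/
noncomputable def epsteinTheta : ℝ → ℂ := fun t => jacobiTheta ((t:ℂ) * I) ^ 2

lemma epstein_hasSum_theta (t : ℝ) (ht : 0 < t) :
    HasSum (fun n : ℤ => ((rexp (-π * (n:ℝ)^2 * t) : ℝ) : ℂ)) (jacobiTheta ((t:ℂ) * I)) := by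
  have h := hasSum_jacobiTheta₂_term 0 (by simpa using ht : 0 < ((t:ℂ) * I).im)
  simp_rw [jacobiTheta₂_term, mul_zero, zero_add, ← jacobiTheta_eq_jacobiTheta₂] at h
  refine h.congr_fun fun n => ?_
  rw [Complex.ofReal_exp]
  congr 1
  push_cast
  ring_nf
  rw [Complex.I_sq]
  ring

lemma epstein_hasSum_thetaSq (t : ℝ) (ht : 0 < t) :
    HasSum (fun p : ℤ × ℤ => ((rexp (-π * ((p.1:ℝ)^2 + (p.2:ℝ)^2) * t) : ℝ) : ℂ))
      (epsteinTheta t) := by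
  have h := epstein_hasSum_theta t ht
  have hs : Summable fun n : ℤ => ‖((rexp (-π * (n:ℝ)^2 * t) : ℝ) : ℂ)‖ := h.summable.norm
  have h2 := epstein_hasSum_mul_sq h hs
  unfold epsteinTheta
  rw [sq]
  refine h2.congr_fun fun p => ?_
  rw [← Complex.ofReal_mul, ← Real.exp_add]
  congr 2
  ring

lemma epstein_continuousOn_theta : ContinuousOn epsteinTheta (Ioi 0) := by
  refine (ContinuousOn.pow ?_ 2)
  intro t ht
  refine ((continuousAt_jacobiTheta ?_).comp ?_).continuousWithinAt
  · simpa using (ht : (0:ℝ) < t)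
  · exact (continuous_ofReal.mul continuous_const).continuousAt

lemma epstein_theta_feq (x : ℝ) (hx : x ∈ Ioi (0:ℝ)) :
    epsteinTheta (1 / x) = ((1:ℂ) * ((x ^ (1:ℝ) : ℝ) : ℂ)) • epsteinTheta x := by
  have hx0 : (0:ℝ) < x := hx
  have hτ : 0 < ((x:ℂ) * I).im := by simpa using hx0
  set τ : UpperHalfPlane := UpperHalfPlane.mk ((x:ℂ) * I) hτ with hτdef
  have hS := jacobiTheta_S_smul τ
  have hxne : ((x:ℝ):ℂ) ≠ 0 := by exact_mod_cast hx0.ne'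
  have hcoe : ((ModularGroup.S • τ : UpperHalfPlane) : ℂ) = ((1/x : ℝ) : ℂ) * I := by
    rw [UpperHalfPlane.modular_S_smul]
    rw [UpperHalfPlane.coe_mk, UpperHalfPlane.coe_mk]
    rw [inv_neg, mul_inv, Complex.inv_I, mul_neg, neg_neg]
    push_cast
    rw [one_div]
  rw [hcoe] at hS
  have hτcoe : (τ : ℂ) = (x:ℂ) * I := rfl
  rw [hτcoe] at hS
  have hmI : -I * ((x:ℂ) * I) = (x:ℂ) := by
    rw [mul_comm (x:ℂ) I, ← mul_assoc]
    simp [Complex.I_mul_I]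
  unfold epsteinTheta
  rw [hS, mul_pow, hmI, sq (((x:ℝ):ℂ) ^ (1/2 : ℂ)), ← Complex.cpow_add _ _ hxne]
  norm_num [Complex.cpow_one, Real.rpow_one, smul_eq_mul]

lemma epstein_theta_sub_one_isBigO' :
    (fun t : ℝ => jacobiTheta ((t:ℂ) * I) - 1) =O[atTop] fun t => rexp (-π * t) := by
  have htend : Tendsto (fun t : ℝ => (t:ℂ) * I) atTop (Filter.comap Complex.im atTop) := by
    rw [Filter.tendsto_comap_iff]
    refine Tendsto.congr (fun t => by simp) tendsto_id
  have := isBigO_at_im_infty_jacobiTheta_sub_one.comp_tendsto htend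
  refine this.congr (fun t => rfl) (fun t => by simp)

lemma epstein_theta_sub_one_isBigO (r : ℝ) :
    (fun t : ℝ => epsteinTheta t - 1) =O[atTop] fun t : ℝ => t ^ r := by
  have hu := epstein_theta_sub_one_isBigO'
  have hb : (fun t : ℝ => rexp (-π * t)) =O[atTop] fun _ => (1:ℝ) := by
    refine IsBigO.of_bound 1 ?_
    filter_upwards [eventually_ge_atTop (0:ℝ)] with t ht
    simp only [Real.norm_eq_abs, Real.abs_exp, norm_one, mul_one]
    exact Real.exp_le_one_iff.mpr (by nlinarith [pi_pos])
  have hu2 : (fun t : ℝ => jacobiTheta ((t:ℂ) * I) + 1) =O[atTop] fun _ => (1:ℝ) := by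
    have : (fun t : ℝ => jacobiTheta ((t:ℂ) * I) + 1)
        = fun t : ℝ => (jacobiTheta ((t:ℂ) * I) - 1) + 2 := by funext t; ring
    rw [this]
    exact (hu.trans hb).add (isBigO_const_const 2 one_ne_zero atTop)
  have key : (fun t : ℝ => epsteinTheta t - 1) =O[atTop] fun t => rexp (-π * t) * 1 := by
    have : (fun t : ℝ => epsteinTheta t - 1)
        = fun t : ℝ => (jacobiTheta ((t:ℂ) * I) - 1) * (jacobiTheta ((t:ℂ) * I) + 1) := by
      funext t; unfold epsteinTheta; ring
    rw [this]
    exact hu.mul hu2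
  simp only [mul_one] at key
  exact key.trans (isLittleO_exp_neg_mul_rpow_atTop pi_pos r).isBigO

/-- The weak FE-pair for the Epstein zeta function of `x² + y²`. -/
noncomputable def epsteinFEPair : WeakFEPair ℂ where
  f := epsteinTheta
  g := epsteinTheta
  k := 1
  ε := 1
  f₀ := 1
  g₀ := 1
  hf_int := (epstein_continuousOn_theta.locallyIntegrableOn measurableSet_Ioi)
  hg_int := (epstein_continuousOn_theta.locallyIntegrableOn measurableSet_Ioi)
  hk := one_pos
  hε := one_ne_zero
  h_feq := epstein_theta_feq
  hf_top := epstein_theta_sub_one_isBigO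
  hg_top := epstein_theta_sub_one_isBigO

lemma epstein_summable_c {σ : ℝ} (hσ : 1 < σ) :
    Summable (fun k : ℤ => if k = 0 then (1:ℝ) else |(k:ℝ)| ^ (-σ)) := by
  have h1 := summable_abs_int_rpow hσ
  have h2 : Summable (fun k : ℤ => if k = 0 then (1:ℝ) else 0) := by
    refine summable_of_ne_finset_zero (s := {0}) (fun k hk => ?_)
    simp only [Finset.mem_singleton] at hk
    simp [hk]
  refine (h1.add h2).congr fun k => ?_
  rcases eq_or_ne k 0 with rfl | hk
  · simp [Real.zero_rpow (by linarith : -σ ≠ 0)]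
  · simp [hk]

lemma epstein_summable_lattice {σ : ℝ} (hσ : 1 < σ) :
    Summable (fun p : ℤ × ℤ => 1 / (((p.1^2 + p.2^2 : ℤ) : ℝ)) ^ σ) := by
  have hσ0 : (0:ℝ) < σ := by linarith
  set c : ℤ → ℝ := fun k => if k = 0 then (1:ℝ) else |(k:ℝ)| ^ (-σ) with hc
  have hcnn : ∀ k, 0 ≤ c k := by
    intro k
    rcases eq_or_ne k 0 with rfl | hk
    · simp [hc]
    · simp only [hc, hk, if_false]
      positivity
  have hprod : Summable (fun p : ℤ × ℤ => c p.1 * c p.2) :=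
    (epstein_summable_c hσ).mul_of_nonneg (epstein_summable_c hσ) hcnn hcnn
  refine Summable.of_nonneg_of_le (fun p => by positivity) (fun p => ?_) hprod
  have habs : ∀ m : ℤ, m ≠ 0 → (1:ℝ) ≤ |(m:ℝ)| := by
    intro m hm
    rw [← Int.cast_abs]
    exact_mod_cast Int.one_le_abs (by exact_mod_cast hm)
  rcases eq_or_ne p.1 0 with h1 | h1 <;> rcases eq_or_ne p.2 0 with h2 | h2
  · simp [h1, h2, hc, Real.zero_rpow (by linarith : σ ≠ 0)]
  · have hb := habs _ h2
    have hq : (((0:ℤ)^2 + p.2^2 : ℤ):ℝ) = |(p.2:ℝ)| ^ 2 := by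
      push_cast
      rw [_root_.sq_abs]
      ring
    simp only [hc, h1, if_pos rfl, h2, if_false, one_mul]
    rw [hq, Real.rpow_neg (abs_nonneg _), ← one_div]
    have e1 : (|(p.2:ℝ)| ^ 2) ^ σ = |(p.2:ℝ)| ^ (2*σ) := by
      rw [← Real.rpow_natCast |(p.2:ℝ)| 2, ← Real.rpow_mul (abs_nonneg _)]
      norm_num
    rw [e1]
    apply one_div_le_one_div_of_le (by positivity)
    exact Real.rpow_le_rpow_of_exponent_le hb (by linarith)
  · have hb := habs _ h1
    have hq : ((p.1^2 + (0:ℤ)^2 : ℤ):ℝ) = |(p.1:ℝ)| ^ 2 := by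
      push_cast
      rw [_root_.sq_abs]
      ring
    simp only [hc, h2, if_pos rfl, h1, if_false, mul_one]
    rw [hq, Real.rpow_neg (abs_nonneg _), ← one_div]
    have e1 : (|(p.1:ℝ)| ^ 2) ^ σ = |(p.1:ℝ)| ^ (2*σ) := by
      rw [← Real.rpow_natCast |(p.1:ℝ)| 2, ← Real.rpow_mul (abs_nonneg _)]
      norm_num
    rw [e1]
    apply one_div_le_one_div_of_le (by positivity)
    exact Real.rpow_le_rpow_of_exponent_le hb (by linarith)
  · have ha := habs _ h1
    have hb := habs _ h2
    simp only [hc, h1, h2, if_false]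
    rw [Real.rpow_neg (abs_nonneg _), Real.rpow_neg (abs_nonneg _), ← mul_inv, ← Real.mul_rpow
      (abs_nonneg _) (abs_nonneg _), ← one_div]
    apply one_div_le_one_div_of_le (by positivity)
    apply Real.rpow_le_rpow (by positivity) ?_ (by linarith)
    push_cast
    nlinarith [_root_.sq_abs ((p.1:ℝ)), _root_.sq_abs ((p.2:ℝ)), sq_nonneg (|(p.1:ℝ)| - |(p.2:ℝ)|)]


lemma epstein_tsum_eq {s : ℂ} (hs : 1 < s.re) :
    (∑' p : ℤ × ℤ, if p ≠ 0 then ((p.1 ^ 2 + p.2 ^ 2 : ℤ) : ℂ) ^ (-s) else 0)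
      = (π:ℂ) ^ s * (Complex.Gamma s)⁻¹ * epsteinFEPair.Λ s := by
  have hs' : 0 < s.re := lt_trans zero_lt_one hs
  have hs0 : s ≠ 0 := fun h => by rw [h] at hs'; simp at hs'
  have hΓ : Complex.Gamma s ≠ 0 := by
    refine Complex.Gamma_ne_zero fun m => ?_
    intro h
    rw [h] at hs'
    simp only [neg_re, natCast_re] at hs'
    have : (0:ℝ) ≤ m := Nat.cast_nonneg m
    linarith
  have hπ : ((π:ℝ):ℂ) ≠ 0 := ofReal_ne_zero.mpr pi_ne_zero
  have hπs : ((π:ℝ):ℂ) ^ s ≠ 0 := by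
    rw [Ne, cpow_eq_zero_iff]
    tauto
  have hMel : mellin (fun t => epsteinTheta t - 1) s = epsteinFEPair.Λ s :=
    (epsteinFEPair.hasMellin (by exact_mod_cast hs : (epsteinFEPair.k : ℝ) < s.re)).2
  have hF : ∀ t ∈ Ioi (0:ℝ), HasSum
      (fun i : ℤ × ℤ => if ((i.1^2 + i.2^2 : ℤ):ℝ) = 0 then 0
        else (1:ℂ) * rexp (-π * ((i.1^2 + i.2^2 : ℤ):ℝ) * t))
      (epsteinTheta t - 1) := by
    intro t ht
    have h := epstein_hasSum_thetaSq t ht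
    have h0 := h.update (0 : ℤ × ℤ) 0
    have hval : ((0:ℂ) - ((rexp (-π * (((0:ℤ×ℤ).1:ℝ)^2 + ((0:ℤ×ℤ).2:ℝ)^2) * t) : ℝ) : ℂ)
        + epsteinTheta t) = epsteinTheta t - 1 := by
      norm_num
      ring
    rw [hval] at h0
    refine h0.congr_fun fun i => ?_
    rcases eq_or_ne i 0 with rfl | hi
    · rw [Function.update_self]
      norm_num
    · rw [Function.update_of_ne hi]
      have hpos : (0:ℤ) < i.1^2 + i.2^2 := by
        have : i.1 ≠ 0 ∨ i.2 ≠ 0 := by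
          by_contra hcon
          push_neg at hcon
          exact hi (Prod.ext hcon.1 hcon.2)
        rcases this with h' | h'
        · have := pow_pos (abs_pos.mpr h') 2
          have h1 : 0 < i.1 ^ 2 := by positivity
          nlinarith [sq_nonneg i.2]
        · have h1 : 0 < i.2 ^ 2 := by positivity
          nlinarith [sq_nonneg i.1]
      have hne : ((i.1^2 + i.2^2 : ℤ):ℝ) ≠ 0 := by
        exact_mod_cast hpos.ne'
      rw [if_neg hne, one_mul]
      norm_cast
  have h_sum : Summable fun i : ℤ × ℤ => ‖(1:ℂ)‖ / ((i.1^2 + i.2^2 : ℤ):ℝ) ^ s.re := by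
    simpa using epstein_summable_lattice hs
  have hHS := hasSum_mellin_pi_mul₀ (a := fun _ : ℤ × ℤ => (1:ℂ))
    (p := fun i : ℤ × ℤ => ((i.1^2 + i.2^2 : ℤ):ℝ)) (F := fun t => epsteinTheta t - 1)
    (fun i => by positivity) hs' hF h_sum
  rw [hMel] at hHS
  have h3 := hHS.mul_left ((π:ℂ) ^ s * (Complex.Gamma s)⁻¹)
  refine (HasSum.tsum_eq ?_)
  refine h3.congr_fun fun i => ?_
  rcases eq_or_ne i 0 with rfl | hi
  · norm_num [zero_cpow hs0]
  · rw [if_pos hi]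
    have hpos : (0:ℤ) < i.1^2 + i.2^2 := by
      have : i.1 ≠ 0 ∨ i.2 ≠ 0 := by
        by_contra hcon
        push_neg at hcon
        exact hi (Prod.ext hcon.1 hcon.2)
      rcases this with h' | h'
      · have h1 : 0 < i.1 ^ 2 := by positivity
        nlinarith [sq_nonneg i.2]
      · have h1 : 0 < i.2 ^ 2 := by positivity
        nlinarith [sq_nonneg i.1]
    have hbase : ((i.1^2 + i.2^2 : ℤ):ℂ) ≠ 0 := by
      exact_mod_cast hpos.ne'
    have hX : ((i.1^2 + i.2^2 : ℤ):ℂ) ^ s ≠ 0 := by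
      rw [Ne, cpow_eq_zero_iff]
      tauto
    have hq : (((i.1^2 + i.2^2 : ℤ):ℝ):ℂ) = ((i.1^2 + i.2^2 : ℤ):ℂ) := by push_cast; ring
    rw [hq, cpow_neg, cpow_neg]
    push_cast at hX ⊢
    field_simp

end EpsteinAux

theorem epstein_zeta_meromorphic_continuation :
    ∃ Z : ℂ → ℂ,
      (∀ s : ℂ, 1 < s.re →
        Z s = ∑' p : ℤ × ℤ, if p ≠ 0 then ((p.1 ^ 2 + p.2 ^ 2 : ℤ) : ℂ) ^ (-s) else 0) ∧
      ∃ g : ℂ → ℂ, AnalyticOn ℂ g Set.univ ∧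
        ∀ s : ℂ, s ≠ 1 → Z s = (Real.pi : ℂ) / (s - 1) + g s := by
  have hπ : ((Real.pi:ℝ):ℂ) ≠ 0 := ofReal_ne_zero.mpr Real.pi_ne_zero
  set F : ℂ → ℂ := fun s => (Real.pi:ℂ) ^ s * (Complex.Gamma s)⁻¹ with hFdef
  have hFdiff : Differentiable ℂ F :=
    (differentiable_id.const_cpow (Or.inl hπ)).mul Complex.differentiable_one_div_Gamma
  have hds : Differentiable ℂ (dslope F 1) := by
    rw [← differentiableOn_univ]
    exact (Complex.differentiableOn_dslope (Filter.univ_mem)).mpr hFdiff.differentiableOn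
  set g : ℂ → ℂ := fun s => F s * epsteinFEPair.Λ₀ s
      - (Real.pi:ℂ) ^ s * (Complex.Gamma (s+1))⁻¹ + dslope F 1 s with hgdef
  have hgdiff : Differentiable ℂ g := by
    refine Differentiable.add (Differentiable.sub ?_ ?_) hds
    · exact hFdiff.mul epsteinFEPair.differentiable_Λ₀
    · exact (differentiable_id.const_cpow (Or.inl hπ)).mul
        (Complex.differentiable_one_div_Gamma.comp (differentiable_id.add_const 1))
  refine ⟨fun s => (Real.pi : ℂ) / (s - 1) + g s, ?_, g,
    (analyticOnNhd_univ_iff_differentiable.mpr hgdiff).analyticOn, fun s _ => rfl⟩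
  intro s hs
  rw [epstein_tsum_eq hs]
  have hs' : 0 < s.re := lt_trans zero_lt_one hs
  have hs0 : s ≠ 0 := fun h => by rw [h] at hs'; simp at hs'
  have hs1 : s ≠ 1 := fun h => by rw [h] at hs; simp at hs
  have hΓ : Complex.Gamma s ≠ 0 := by
    refine Complex.Gamma_ne_zero fun m => ?_
    intro h
    rw [h] at hs'
    simp only [neg_re, natCast_re] at hs'
    have : (0:ℝ) ≤ m := Nat.cast_nonneg m
    linarith
  have hΓ1 : Complex.Gamma (s + 1) = s * Complex.Gamma s := Complex.Gamma_add_one s hs0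
  have hF1 : F 1 = (Real.pi:ℂ) := by
    simp [hFdef, Complex.Gamma_one, cpow_one]
  have hΛ : epsteinFEPair.Λ s = epsteinFEPair.Λ₀ s - 1/s - 1/(1 - s) := by
    rw [WeakFEPair.Λ]
    show epsteinFEPair.Λ₀ s - (1/s) • (1:ℂ) - ((1:ℂ) / (((1:ℝ):ℂ) - s)) • (1:ℂ) = _
    simp [smul_eq_mul]
  have hdsl : dslope F 1 s = (F s - F 1) / (s - 1) := by
    rw [dslope_of_ne F hs1, slope_def_field]
  rw [hΛ, hgdef]
  simp only []
  rw [hdsl, hF1, hΓ1]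
  have h1s : (1:ℂ) - s ≠ 0 := by
    rw [sub_ne_zero]
    exact fun h => hs1 h.symm
  have hs1' : s - 1 ≠ 0 := sub_ne_zero.mpr hs1
  have e2 : (Real.pi:ℂ) ^ s * (s * Complex.Gamma s)⁻¹ = F s * s⁻¹ := by
    rw [hFdef]
    simp only []
    rw [mul_inv]
    ring
  have hFs : (Real.pi:ℂ) ^ s * (Complex.Gamma s)⁻¹ = F s := rfl
  rw [e2, hFs]
  have key : ∀ a L : ℂ, (Real.pi:ℂ)/(s-1) + (a * L - a * s⁻¹ + (a - (Real.pi:ℂ))/(s-1))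
      = a * (L - 1/s - 1/(1-s)) := by
    intro a L
    field_simp
    ring
  exact key (F s) (epsteinFEPair.Λ₀ s)
end

section
/- Let f be a smooth function on (0,∞) and define g(y) = y^{-1/2} f(1/y). Then for every nonnegative integer a, the a-th derivative of g satisfies g^{(a)}(y) = (-1)^a · Σ_{k=0}^{a} ((2a)·(2a-1)···(2a-2k+1) / (4^k · k!)) · f^{(a-k)}(1/y) · y^{k - 2a - 1/2}. -/
open Set

lemma coeff_rec (a k : ℕ) :
    (((2*a+2).descFactorial (2*k+2) : ℝ))/(4^(k+1) * (k+1).factorial)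
      = ((2*a).descFactorial (2*k+2) : ℝ)/(4^(k+1) * (k+1).factorial)
        + ((2*a).descFactorial (2*k) : ℝ)/(4^k * k.factorial) * (2*a + 1/2 - k) := by
  have h1 : (2*a+2).descFactorial (2*k+2) = (2*a+2) * ((2*a+1) * (2*a).descFactorial (2*k)) := by
    rw [show 2*a+2 = (2*a+1)+1 by ring, show 2*k+2 = (2*k+1)+1 by ring,
      Nat.succ_descFactorial_succ, Nat.succ_descFactorial_succ]
  have h2 : (2*a).descFactorial (2*k+2) = (2*a - (2*k+1)) * ((2*a - 2*k) * (2*a).descFactorial (2*k)) := by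
    rw [show 2*k+2 = (2*k+1)+1 by ring, Nat.descFactorial_succ, Nat.descFactorial_succ]
  rcases lt_trichotomy k a with h | h | h
  · rw [h1, h2]
    have c1 : ((2*a - (2*k+1) : ℕ) : ℝ) = 2*a - 2*k - 1 := by
      have : 2*k+1 ≤ 2*a := by omega
      push_cast [this]; ring
    have c2 : ((2*a - 2*k : ℕ) : ℝ) = 2*a - 2*k := by
      have : 2*k ≤ 2*a := by omega
      push_cast [this]; ring
    push_cast [c1, c2, Nat.factorial_succ]
    have hf : (k.factorial : ℝ) ≠ 0 := Nat.cast_ne_zero.2 k.factorial_ne_zero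
    have h4 : (4:ℝ)^k ≠ 0 := by positivity
    field_simp
    ring
  · subst h
    rw [h1]
    have : (2*k).descFactorial (2*k+2) = 0 := by
      apply Nat.descFactorial_eq_zero_iff_lt.2; omega
    rw [this]
    push_cast [Nat.factorial_succ]
    have hf : (k.factorial : ℝ) ≠ 0 := Nat.cast_ne_zero.2 k.factorial_ne_zero
    have h4 : (4:ℝ)^k ≠ 0 := by positivity
    field_simp
    ring
  · have e1 : (2*a+2).descFactorial (2*k+2) = 0 := Nat.descFactorial_eq_zero_iff_lt.2 (by omega)
    have e2 : (2*a).descFactorial (2*k+2) = 0 := Nat.descFactorial_eq_zero_iff_lt.2 (by omega)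
    have e3 : (2*a).descFactorial (2*k) = 0 := Nat.descFactorial_eq_zero_iff_lt.2 (by omega)
    rw [e1, e2, e3]
    simp

lemma sum_step (a : ℕ) (P Q : ℕ → ℝ) :
    ∑ k ∈ Finset.range (a+2), ((2*(a+1)).descFactorial (2*k) : ℝ)/(4^k * k.factorial) * (P (a+1-k) * Q k)
    = ∑ k ∈ Finset.range (a+1), ((2*a).descFactorial (2*k) : ℝ)/(4^k * k.factorial) *
        (P (a+1-k) * Q k + (2*a + 1/2 - k) * (P (a-k) * Q (k+1))) := by
  rw [Finset.sum_range_succ' _ (a+1)]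
  have step : ∀ k ∈ Finset.range (a+1),
      ((2*(a+1)).descFactorial (2*(k+1)) : ℝ)/(4^(k+1) * (k+1).factorial) * (P (a+1-(k+1)) * Q (k+1))
      = ((2*a).descFactorial (2*(k+1)) : ℝ)/(4^(k+1) * (k+1).factorial) * (P (a-k) * Q (k+1))
        + ((2*a).descFactorial (2*k) : ℝ)/(4^k * k.factorial) * ((2*a + 1/2 - (k:ℝ)) * (P (a-k) * Q (k+1))) := by
    intro k _
    rw [show 2*(k+1) = 2*k+2 by ring, show 2*(a+1) = 2*a+2 by ring, coeff_rec a k,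
      Nat.succ_sub_succ a k]
    ring
  rw [Finset.sum_congr rfl step, Finset.sum_add_distrib]
  have rhs : ∀ k ∈ Finset.range (a+1),
      ((2*a).descFactorial (2*k) : ℝ)/(4^k * k.factorial) *
        (P (a+1-k) * Q k + (2*a + 1/2 - (k:ℝ)) * (P (a-k) * Q (k+1)))
      = ((2*a).descFactorial (2*k) : ℝ)/(4^k * k.factorial) * (P (a+1-k) * Q k)
        + ((2*a).descFactorial (2*k) : ℝ)/(4^k * k.factorial) * ((2*a + 1/2 - (k:ℝ)) * (P (a-k) * Q (k+1))) :=
    fun k _ => by ring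
  rw [Finset.sum_congr rfl rhs, Finset.sum_add_distrib]
  have key : (∑ k ∈ Finset.range (a+1),
        ((2*a).descFactorial (2*(k+1)) : ℝ)/(4^(k+1) * (k+1).factorial) * (P (a-k) * Q (k+1)))
      + ((2*(a+1)).descFactorial (2*0) : ℝ)/(4^0 * (Nat.factorial 0)) * (P (a+1-0) * Q 0)
      = ∑ k ∈ Finset.range (a+1), ((2*a).descFactorial (2*k) : ℝ)/(4^k * k.factorial) * (P (a+1-k) * Q k) := by
    rw [Finset.sum_range_succ' (fun k => ((2*a).descFactorial (2*k) : ℝ)/(4^k * k.factorial) * (P (a+1-k) * Q k)) a]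
    rw [Finset.sum_range_succ]
    have z : (2*a).descFactorial (2*(a+1)) = 0 := Nat.descFactorial_eq_zero_iff_lt.2 (by omega)
    simp [z, Nat.succ_sub_succ]
  linarith [key]

theorem deriv_sqrt_inv_composition (f : ℝ → ℝ) (hf : ContDiffOn ℝ (⊤ : ℕ∞) f (Set.Ioi 0))
    (a : ℕ) (y : ℝ) (hy : y ∈ Set.Ioi (0 : ℝ)) :
    iteratedDerivWithin a (fun u => u ^ (-(1 / 2) : ℝ) * f (1 / u)) (Set.Ioi 0) y
      = (-1) ^ a * ∑ k ∈ Finset.range (a + 1),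
          ((Nat.descFactorial (2 * a) (2 * k) : ℝ) / (4 ^ k * (k.factorial : ℝ))) *
            iteratedDerivWithin (a - k) f (Set.Ioi 0) (1 / y) *
            y ^ ((k : ℝ) - 2 * a - 1 / 2) := by
  have hS : IsOpen (Set.Ioi (0:ℝ)) := isOpen_Ioi
  have hU : UniqueDiffOn ℝ (Set.Ioi (0:ℝ)) := hS.uniqueDiffOn
  have hF : ∀ (m : ℕ) (x : ℝ), x ∈ Set.Ioi (0:ℝ) →
      HasDerivAt (iteratedDerivWithin m f (Set.Ioi 0)) (iteratedDerivWithin (m+1) f (Set.Ioi 0) x) x := by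
    intro m x hx
    have hd : DifferentiableWithinAt ℝ (iteratedDerivWithin m f (Set.Ioi 0)) (Set.Ioi 0) x :=
      (hf.differentiableOn_iteratedDerivWithin (by exact_mod_cast ENat.coe_lt_top m) hU) x hx
    have hda : DifferentiableAt ℝ (iteratedDerivWithin m f (Set.Ioi 0)) x :=
      hd.differentiableAt (hS.mem_nhds hx)
    have h2 : iteratedDerivWithin (m+1) f (Set.Ioi 0) x = deriv (iteratedDerivWithin m f (Set.Ioi 0)) x := by
      rw [iteratedDerivWithin_succ, derivWithin_of_isOpen hS hx]
    rw [h2]; exact hda.hasDerivAt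
  induction a generalizing y hy with
  | zero =>
    rw [iteratedDerivWithin_zero]
    simp only [Finset.sum_range_one, Nat.mul_zero, Nat.descFactorial_zero, Nat.sub_zero,
      iteratedDerivWithin_zero, pow_zero, Nat.factorial_zero, Nat.cast_one, Nat.cast_zero]
    norm_num
    ring
  | succ a ih =>
    have hy0 : (0:ℝ) < y := hy
    have hyne : y ≠ 0 := ne_of_gt hy0
    have hyinv : (1/y) ∈ Set.Ioi (0:ℝ) := by simpa using one_div_pos.2 hy0
    rw [iteratedDerivWithin_succ]
    have hEq : Set.EqOn (iteratedDerivWithin a (fun u => u ^ (-(1 / 2) : ℝ) * f (1 / u)) (Set.Ioi 0))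
        (fun z => (-1) ^ a * ∑ k ∈ Finset.range (a + 1),
          ((Nat.descFactorial (2 * a) (2 * k) : ℝ) / (4 ^ k * (k.factorial : ℝ))) *
            iteratedDerivWithin (a - k) f (Set.Ioi 0) (1 / z) *
            z ^ ((k : ℝ) - 2 * a - 1 / 2)) (Set.Ioi 0) := fun z hz => ih z hz
    rw [derivWithin_congr hEq (hEq hy), derivWithin_of_isOpen hS hy]
    -- derivative of each term
    have hterm : ∀ k ∈ Finset.range (a+1), HasDerivAt (fun z =>
        ((Nat.descFactorial (2 * a) (2 * k) : ℝ) / (4 ^ k * (k.factorial : ℝ))) *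
          iteratedDerivWithin (a - k) f (Set.Ioi 0) (1 / z) * z ^ ((k : ℝ) - 2 * a - 1 / 2))
        (((Nat.descFactorial (2 * a) (2 * k) : ℝ) / (4 ^ k * (k.factorial : ℝ))) *
            (iteratedDerivWithin (a - k + 1) f (Set.Ioi 0) (1 / y) * (-(1/y^2))) * y ^ ((k : ℝ) - 2 * a - 1 / 2)
          + ((Nat.descFactorial (2 * a) (2 * k) : ℝ) / (4 ^ k * (k.factorial : ℝ))) *
            iteratedDerivWithin (a - k) f (Set.Ioi 0) (1 / y) *
            (((k : ℝ) - 2 * a - 1 / 2) * y ^ ((k : ℝ) - 2 * a - 1 / 2 - 1))) y := by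
      intro k _
      have hinv : HasDerivAt (fun u : ℝ => 1/u) (-(1/y^2)) y := by
        simpa [one_div] using hasDerivAt_inv hyne
      have hcomp : HasDerivAt (fun u : ℝ => iteratedDerivWithin (a-k) f (Set.Ioi 0) (1/u))
          (iteratedDerivWithin (a-k+1) f (Set.Ioi 0) (1/y) * (-(1/y^2))) y :=
        (hF (a-k) (1/y) hyinv).comp y hinv
      have hpow : HasDerivAt (fun z : ℝ => z ^ ((k : ℝ) - 2 * a - 1 / 2))
          (((k : ℝ) - 2 * a - 1 / 2) * y ^ ((k : ℝ) - 2 * a - 1 / 2 - 1)) y :=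
        Real.hasDerivAt_rpow_const (Or.inl hyne)
      exact (hcomp.const_mul _).mul hpow
    have hD := (HasDerivAt.fun_sum hterm).const_mul ((-1:ℝ)^a)
    rw [hD.deriv]
    have hsum2 : ∑ k ∈ Finset.range (a+1+1),
        ((Nat.descFactorial (2 * (a+1)) (2 * k) : ℝ) / (4 ^ k * (k.factorial : ℝ))) *
          iteratedDerivWithin (a + 1 - k) f (Set.Ioi 0) (1 / y) *
          y ^ ((k : ℝ) - 2 * (↑(a+1):ℝ) - 1 / 2)
        = ∑ k ∈ Finset.range (a+2),
        ((Nat.descFactorial (2 * (a+1)) (2 * k) : ℝ) / (4 ^ k * (k.factorial : ℝ))) *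
          (iteratedDerivWithin (a + 1 - k) f (Set.Ioi 0) (1 / y) *
          y ^ ((k : ℝ) - 2 * (↑(a+1):ℝ) - 1 / 2)) :=
      Finset.sum_congr rfl (fun k _ => mul_assoc _ _ _)
    rw [hsum2, sum_step a (fun m => iteratedDerivWithin m f (Set.Ioi 0) (1 / y))
      (fun k => y ^ ((k : ℝ) - 2 * (↑(a+1):ℝ) - 1 / 2))]
    have per : ∀ k ∈ Finset.range (a+1),
        ((Nat.descFactorial (2 * a) (2 * k) : ℝ) / (4 ^ k * (k.factorial : ℝ))) *
            (iteratedDerivWithin (a - k + 1) f (Set.Ioi 0) (1 / y) * (-(1/y^2))) *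
            y ^ ((k : ℝ) - 2 * a - 1 / 2)
          + ((Nat.descFactorial (2 * a) (2 * k) : ℝ) / (4 ^ k * (k.factorial : ℝ))) *
            iteratedDerivWithin (a - k) f (Set.Ioi 0) (1 / y) *
            (((k : ℝ) - 2 * a - 1 / 2) * y ^ ((k : ℝ) - 2 * a - 1 / 2 - 1))
        = -(((Nat.descFactorial (2 * a) (2 * k) : ℝ) / (4 ^ k * (k.factorial : ℝ))) *
            (iteratedDerivWithin (a + 1 - k) f (Set.Ioi 0) (1 / y) *
              y ^ ((k : ℝ) - 2 * (↑(a+1):ℝ) - 1 / 2)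
            + (2*(a:ℝ) + 1/2 - (k:ℝ)) * (iteratedDerivWithin (a - k) f (Set.Ioi 0) (1 / y) *
              y ^ ((↑(k+1) : ℝ) - 2 * (↑(a+1):ℝ) - 1 / 2)))) := by
      intro k hk
      have hk' : k ≤ a := by
        have := Finset.mem_range.1 hk; omega
      rw [show a - k + 1 = a + 1 - k by omega]
      have e2 : y ^ ((k : ℝ) - 2 * a - 1 / 2)
          = y ^ ((k : ℝ) - 2 * (↑(a+1):ℝ) - 1 / 2) * y ^ 2 := by
        rw [← Real.rpow_natCast y 2, ← Real.rpow_add hy0]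
        congr 1; push_cast; ring
      have e3 : y ^ ((k : ℝ) - 2 * a - 1 / 2 - 1)
          = y ^ ((↑(k+1) : ℝ) - 2 * (↑(a+1):ℝ) - 1 / 2) := by
        congr 1; push_cast; ring
      rw [e2, e3]
      field_simp
      ring
    rw [Finset.sum_congr rfl per, Finset.sum_neg_distrib]
    ring
end
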